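/- arXiv:2403.18805 — 9 statements merged into one kernel-verified Lean document; each statement's English description precedes it below -/
import Mathlib

section
/- Let N be a compact subset of the phase space of a continuous flow. Call p ∈ N a clean exit point if there exists ε > 0 with φ(p,(0,ε)) ∩ N = ∅. Then the set of clean exit points is dense in the immediate exit set N^o = {p ∈ N : for every ε > 0, φ(p,[0,ε]) ⊄ N}. -/
open Set

/-- The set of clean exit points is dense in the immediate exit set `N^o`. -/
theorem stmt3 {X : Type*} [MetricSpace X]
    (φ : ℝ → X → X)
    (hφcont : Continuous fun q : ℝ × X => φ q.1 q.2)
    (hφzero : ∀ p, φ 0 p = p)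
    (hφadd : ∀ s t p, φ (s + t) p = φ s (φ t p))
    (N : Set X) (hN : IsCompact N) :
    {p ∈ N | ∀ ε : ℝ, 0 < ε → ¬ ∀ s ∈ Icc (0:ℝ) ε, φ s p ∈ N} ⊆
      closure {p ∈ N | ∃ ε : ℝ, 0 < ε ∧ ∀ t ∈ Ioo (0:ℝ) ε, φ t p ∉ N} := by
  rintro p ⟨hpN, hexit⟩
  rw [Metric.mem_closure_iff]
  intro δ hδ
  have hc : Continuous fun s : ℝ => φ s p :=
    hφcont.comp (continuous_id.prodMk continuous_const)
  -- continuity at 0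
  obtain ⟨t0, ht0pos, ht0⟩ :=
    Metric.continuous_iff.mp hc 0 δ hδ
  -- pick t ∈ (0, t0/2] with φ t p ∉ N
  obtain ⟨t, htmem, htN⟩ := by
    have := hexit (t0 / 2) (by linarith)
    push_neg at this
    exact this
  have htpos : 0 < t := by
    rcases lt_or_eq_of_le htmem.1 with h | h
    · exact h
    · exfalso; apply htN; rw [← h, hφzero]; exact hpN
  -- the set of times in [0,t] where the orbit is in N
  set A : Set ℝ := Icc 0 t ∩ (fun s => φ s p) ⁻¹' N with hA
  have hAclosed : IsClosed A := isClosed_Icc.inter (hN.isClosed.preimage hc)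
  have hAcomp : IsCompact A := (isCompact_Icc).inter_right (hN.isClosed.preimage hc)
  have hA0 : (0 : ℝ) ∈ A := ⟨⟨le_refl 0, le_of_lt htpos⟩, by simp [hφzero, hpN]⟩
  have hAne : A.Nonempty := ⟨0, hA0⟩
  set s := sSup A with hs
  have hsA : s ∈ A := hAcomp.sSup_mem hAne
  have hsle : s ≤ t := hsA.1.2
  have hs0 : 0 ≤ s := hsA.1.1
  have hslt : s < t := by
    rcases lt_or_eq_of_le hsle with h | h
    · exact h
    · exfalso; apply htN; rw [← h]; exact hsA.2
  refine ⟨φ s p, ⟨hsA.2, t - s, by linarith, ?_⟩, ?_⟩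
  · intro r hr hrN
    have hmem : r + s ∈ A := by
      refine ⟨⟨by linarith [hr.1, hs0], by linarith [hr.2]⟩, ?_⟩
      show φ (r + s) p ∈ N
      rw [hφadd]; exact hrN
    have : r + s ≤ s := le_csSup hAcomp.bddAbove hmem
    linarith [hr.1]
  · have : dist (φ s p) (φ 0 p) < δ := by
      apply ht0
      rw [Real.dist_eq, sub_zero, abs_of_nonneg hs0]
      calc s ≤ t := hsle
        _ ≤ t0 / 2 := htmem.2
        _ < t0 := by linarith
    rw [hφzero] at this
    rw [dist_comm]
    exact this
end

section
/- Let N be an isolating neighbourhood for a continuous flow and define for p ∈ N the exit time t^o(p) = sup{t ≥ 0 : φ(p,[0,t]) ⊆ N} ∈ [0,+∞]. If the immediate exit set N^o = {p ∈ N : t^o(p) = 0} is closed in N, then the map t^o : N → [0,+∞] is continuous. -/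
open Set ENNReal Filter Topology

/-- For an isolating neighbourhood `N`, if the immediate exit set
`N^o = {p ∈ N : t^o(p) = 0}` is closed, then the exit-time map
`t^o : N → [0,+∞]` is continuous. -/
theorem stmt4 {X : Type*} [MetricSpace X]
    (φ : ℝ → X → X)
    (hφcont : Continuous fun q : ℝ × X => φ q.1 q.2)
    (hφzero : ∀ p, φ 0 p = p)
    (hφadd : ∀ s t p, φ (s + t) p = φ s (φ t p))
    (N : Set X) (hN : IsCompact N)
    (hiso : ∀ p ∈ frontier N, ¬ ∀ t : ℝ, φ t p ∈ N)
    (tO : X → ℝ≥0∞)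
    (htO : ∀ p, tO p = ⨆ t ∈ {t : ℝ | 0 ≤ t ∧ ∀ s ∈ Icc (0:ℝ) t, φ s p ∈ N},
      ENNReal.ofReal t)
    (hclosed : IsClosed {p ∈ N | tO p = 0}) :
    ContinuousOn tO N := by
  have hNclosed : IsClosed N := hN.isClosed
  -- basic sup facts
  have hle : ∀ x t, (0 ≤ t ∧ ∀ s ∈ Icc (0:ℝ) t, φ s x ∈ N) →
      ENNReal.ofReal t ≤ tO x := by
    intro x t ht
    rw [htO]
    exact le_biSup _ ht
  have hsup_le : ∀ x (c : ℝ≥0∞),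
      (∀ t, (0 ≤ t ∧ ∀ s ∈ Icc (0:ℝ) t, φ s x ∈ N) → ENNReal.ofReal t ≤ c) →
      tO x ≤ c := by
    intro x c h
    rw [htO]
    exact iSup₂_le h
  have hexists : ∀ x (c : ℝ≥0∞), c < tO x →
      ∃ t, (0 ≤ t ∧ ∀ s ∈ Icc (0:ℝ) t, φ s x ∈ N) ∧ c < ENNReal.ofReal t := by
    intro x c hc
    rw [htO x] at hc
    obtain ⟨t, ht⟩ := lt_iSup_iff.mp hc
    obtain ⟨htS, ht2⟩ := lt_iSup_iff.mp ht
    exact ⟨t, htS, ht2⟩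
  have hcontx : ∀ x : X, Continuous fun s : ℝ => φ s x := fun x =>
    hφcont.comp (continuous_id.prodMk continuous_const)
  have hconts : ∀ s : ℝ, Continuous fun x : X => φ s x := fun s =>
    hφcont.comp (continuous_const.prodMk continuous_id)
  -- the sup is attained when finite
  have hattain : ∀ x ∈ N, tO x ≠ ⊤ → ∀ s ∈ Icc (0:ℝ) (tO x).toReal, φ s x ∈ N := by
    intro x hx hfin
    have hofτ : ENNReal.ofReal (tO x).toReal = tO x := ENNReal.ofReal_toReal hfin
    have key : ∀ s ∈ Ico (0:ℝ) (tO x).toReal, φ s x ∈ N := by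
      intro s hs
      have hlt : ENNReal.ofReal s < tO x := by
        rw [← hofτ]
        exact (ENNReal.ofReal_lt_ofReal_iff_of_nonneg hs.1).2 hs.2
      obtain ⟨t, ⟨ht0, htadm⟩, hst⟩ := hexists x _ hlt
      have : s < t := by
        by_contra h
        push_neg at h
        exact absurd (ENNReal.ofReal_le_ofReal h) (not_le.2 hst)
      exact htadm s ⟨hs.1, this.le⟩
    intro s hs
    rcases eq_or_lt_of_le hs.2 with he | hlt
    · -- boundary case s = toReal (tO x)
      rcases eq_or_lt_of_le hs.1 with h0 | h0
      · rw [← h0, hφzero]; exact hx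
      · have hτpos : (0:ℝ) < s := h0
        have htend : Tendsto (fun u : ℝ => φ u x) (𝓝[<] s) (𝓝 (φ s x)) :=
          ((hcontx x).tendsto s).mono_left nhdsWithin_le_nhds
        refine hNclosed.mem_of_tendsto htend ?_
        filter_upwards [Ico_mem_nhdsLT hτpos] with u hu
        exact key u (by rw [← he]; exact hu)
    · exact key s ⟨hs.1, hlt⟩
  -- the point reached at the (finite) exit time is in the immediate exit set
  have hstop : ∀ y ∈ N, tO y ≠ ⊤ →
      φ (tO y).toReal y ∈ N ∧ tO (φ (tO y).toReal y) = 0 := by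
    intro y hy hfin
    set τ : ℝ := (tO y).toReal with hτ
    have hτ0 : 0 ≤ τ := ENNReal.toReal_nonneg
    have hofτ : ENNReal.ofReal τ = tO y := ENNReal.ofReal_toReal hfin
    have hmemN : φ τ y ∈ N := hattain y hy hfin τ ⟨hτ0, le_refl _⟩
    refine ⟨hmemN, le_antisymm ?_ zero_le⟩
    refine hsup_le _ _ ?_
    rintro u ⟨hu0, huadm⟩
    have hule : u ≤ 0 := by
      by_contra hupos
      push_neg at hupos
      -- τ + u is admissible for y
      have hadm : 0 ≤ τ + u ∧ ∀ s ∈ Icc (0:ℝ) (τ + u), φ s y ∈ N := by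
        refine ⟨by linarith, ?_⟩
        intro s hs
        rcases le_or_gt s τ with h | h
        · exact hattain y hy hfin s ⟨hs.1, h⟩
        · have : φ s y = φ (s - τ) (φ τ y) := by
            rw [← hφadd]
            ring_nf
          rw [this]
          exact huadm (s - τ) ⟨by linarith, by linarith [hs.2]⟩
      have h1 : ENNReal.ofReal (τ + u) ≤ tO y := hle _ _ hadm
      rw [← hofτ] at h1
      have : τ + u ≤ τ := (ENNReal.ofReal_le_ofReal_iff hτ0).1 h1
      linarith
    simp [ENNReal.ofReal_eq_zero.2 hule]
  -- sublevel sets are closed (this is lower semicontinuity; uses `hclosed`)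
  have hsub : ∀ r : ℝ, 0 ≤ r → IsClosed {x ∈ N | tO x ≤ ENNReal.ofReal r} := by
    intro r hr
    rw [← isSeqClosed_iff_isClosed]
    intro x p hxmem hxlim
    have hxN : ∀ n, x n ∈ N := fun n => (hxmem n).1
    have hpN : p ∈ N := hNclosed.mem_of_tendsto hxlim (Eventually.of_forall hxN)
    refine ⟨hpN, ?_⟩
    by_contra hgt
    push_neg at hgt
    obtain ⟨t, ⟨ht0, htadm⟩, htr⟩ := hexists p _ hgt
    have hrt : r < t := by
      by_contra h
      push_neg at h
      exact absurd (ENNReal.ofReal_le_ofReal h) (not_le.2 htr)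
    set τ : ℕ → ℝ := fun n => (tO (x n)).toReal with hτdef
    have hfin : ∀ n, tO (x n) ≠ ⊤ :=
      fun n => ne_top_of_le_ne_top ENNReal.ofReal_ne_top (hxmem n).2
    have hτmem : ∀ n, τ n ∈ Icc (0:ℝ) r := fun n =>
      ⟨ENNReal.toReal_nonneg, ENNReal.toReal_le_of_le_ofReal hr (hxmem n).2⟩
    obtain ⟨τ₀, hτ₀mem, ψ, hψ, hτlim⟩ := isCompact_Icc.tendsto_subseq hτmem
    have hq : ∀ n, φ (τ n) (x n) ∈ {p ∈ N | tO p = 0} := fun n =>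
      hstop (x n) (hxN n) (hfin n)
    have hqlim : Tendsto (fun k => φ (τ (ψ k)) (x (ψ k))) atTop (𝓝 (φ τ₀ p)) := by
      have h1 : Tendsto (fun k => ((τ (ψ k), x (ψ k)) : ℝ × X)) atTop (𝓝 (τ₀, p)) :=
        hτlim.prodMk_nhds (hxlim.comp hψ.tendsto_atTop)
      exact (hφcont.tendsto (τ₀, p)).comp h1
    have hmem : φ τ₀ p ∈ {p ∈ N | tO p = 0} :=
      hclosed.mem_of_tendsto hqlim (Eventually.of_forall fun k => hq (ψ k))
    have hτ₀t : τ₀ < t := lt_of_le_of_lt hτ₀mem.2 hrt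
    have hpos : ENNReal.ofReal (t - τ₀) ≤ tO (φ τ₀ p) := by
      refine hle _ _ ⟨by linarith, ?_⟩
      intro s hs
      have : φ s (φ τ₀ p) = φ (s + τ₀) p := (hφadd s τ₀ p).symm
      rw [this]
      exact htadm (s + τ₀) ⟨by linarith [hs.1, hτ₀mem.1], by linarith [hs.2]⟩
    rw [hmem.2] at hpos
    have : (0:ℝ≥0∞) < ENNReal.ofReal (t - τ₀) := ENNReal.ofReal_pos.2 (by linarith)
    exact absurd hpos (not_le.2 this)
  -- assemble continuity
  intro p hp
  rw [ContinuousWithinAt]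
  refine tendsto_order.2 ⟨?_, ?_⟩
  · -- lower semicontinuity at p
    intro b hb
    obtain ⟨t, ⟨ht0, htadm⟩, hbt⟩ := hexists p b hb
    obtain ⟨r, hr0, hbr, hrt⟩ := ENNReal.lt_iff_exists_real_btwn.1 hbt
    have hpnot : p ∉ {x ∈ N | tO x ≤ ENNReal.ofReal r} := by
      rintro ⟨-, hple⟩
      exact absurd (le_trans (hle p t ⟨ht0, htadm⟩) hple) (not_le.2 hrt)
    have hopen : {x ∈ N | tO x ≤ ENNReal.ofReal r}ᶜ ∈ 𝓝 p :=
      (hsub r hr0).isOpen_compl.mem_nhds hpnot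
    filter_upwards [mem_nhdsWithin_of_mem_nhds hopen, self_mem_nhdsWithin] with x hx hxN
    have : ¬ tO x ≤ ENNReal.ofReal r := fun h => hx ⟨hxN, h⟩
    exact lt_of_lt_of_le hbr (le_of_not_ge this)
  · -- upper semicontinuity at p
    intro b hb
    obtain ⟨r, hr0, hpr, hrb⟩ := ENNReal.lt_iff_exists_real_btwn.1 hb
    have hSclosed : IsClosed {x : X | ∀ s ∈ Icc (0:ℝ) r, φ s x ∈ N} := by
      have : {x : X | ∀ s ∈ Icc (0:ℝ) r, φ s x ∈ N} =
          ⋂ s ∈ Icc (0:ℝ) r, (fun x => φ s x) ⁻¹' N := by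
        ext x; simp [mem_iInter]
      rw [this]
      exact isClosed_biInter fun s _ => hNclosed.preimage (hconts s)
    have hpnot : p ∉ {x : X | ∀ s ∈ Icc (0:ℝ) r, φ s x ∈ N} := by
      intro hmem
      exact absurd (hle p r ⟨hr0, hmem⟩) (not_le.2 hpr)
    have hopen : {x : X | ∀ s ∈ Icc (0:ℝ) r, φ s x ∈ N}ᶜ ∈ 𝓝 p :=
      hSclosed.isOpen_compl.mem_nhds hpnot
    filter_upwards [mem_nhdsWithin_of_mem_nhds hopen] with x hx
    have hxle : tO x ≤ ENNReal.ofReal r := by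
      refine hsup_le _ _ ?_
      rintro t ⟨ht0, htadm⟩
      refine ENNReal.ofReal_le_ofReal ?_
      by_contra h
      push_neg at h
      exact hx fun s hs => htadm s ⟨hs.1, le_trans hs.2 h.le⟩
    exact lt_of_le_of_lt hxle hrb
end

section
/- Let N be an isolating neighbourhood with closed immediate exit set N^o, and suppose p ∈ fr N (the topological frontier of N) satisfies: for every ε > 0, φ(p,(-ε,0]) ∩ int N ≠ ∅. Then p ∈ N^o, i.e. t^o(p) = 0. -/
open Set

/-!
Near `p` there are points `x ∉ N` whose backward orbits enter `int N`; following such an orbit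
forward again, it must leave `N` before reaching `x`, and the point where it does so lies in the
immediate exit set `N^o`. As `x → p`, compactness of the time interval and closedness of `N^o`
produce a point of `N^o` on the orbit segment `φ(p, [t, 0])` whenever `φ(p, t) ∈ int N`. Since
such `t ≤ 0` can be taken arbitrarily close to `0`, closedness of `N^o` gives `p ∈ N^o`.
-/

namespace Flow

variable {X : Type*} [TopologicalSpace X] (ϕ : Flow ℝ X) (N : Set X)

def immediateExitSet : Set X :=
  {p ∈ N | ∀ ε : ℝ, 0 < ε → ¬ ∀ s ∈ Icc (0:ℝ) ε, ϕ s p ∈ N}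

variable {ϕ N}

theorem exists_mem_immediateExitSet_of_notMem (hN : IsClosed N) {y : X} (hy : y ∈ N)
    {T : ℝ} (hT : 0 ≤ T) (hTy : ϕ T y ∉ N) : ∃ s ∈ Ico 0 T, ϕ s y ∈ ϕ.immediateExitSet N := by
  by_contra! hE
  refine hTy (IsClosed.Icc_subset_of_forall_exists_gt (s := {s | ϕ s y ∈ N}) ?_ ?_ ?_ ⟨hT, le_rfl⟩)
  · exact (hN.preimage (ϕ.continuous continuous_id continuous_const)).inter isClosed_Icc
  · simpa [map_zero_apply] using hy
  · intro s ⟨hsN, hs⟩ s' hss'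
    obtain ⟨ε, hε, hstay⟩ : ∃ ε > 0, ∀ u ∈ Icc (0:ℝ) ε, ϕ u (ϕ s y) ∈ N := by
      simpa using not_and.1 (hE s hs) hsN
    have hδ : 0 < min ε (s' - s) := lt_min hε (sub_pos.2 hss')
    refine ⟨min ε (s' - s) + s, ?_, lt_add_of_pos_left s hδ, by linarith [min_le_right ε (s' - s)]⟩
    simpa only [mem_ofPred_eq, map_add] using hstay _ ⟨hδ.le, min_le_left _ _⟩

theorem exists_mem_immediateExitSet_of_mem_closure_compl (hN : IsClosed N)
    (hE : IsClosed (ϕ.immediateExitSet N)) {q : X} (hq : q ∈ closure Nᶜ) {t : ℝ} (ht : t ≤ 0)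
    (htq : ϕ t q ∈ interior N) : ∃ r ∈ Icc t 0, ϕ r q ∈ ϕ.immediateExitSet N := by
  set B : Set X := {x | ∃ r ∈ Icc t 0, ϕ r x ∈ ϕ.immediateExitSet N}
  set U : Set X := ϕ t ⁻¹' interior N
  have hU : IsOpen U := isOpen_interior.preimage (ϕ.continuous_toFun t)
  have hB : IsClosed B := by
    have : B = Prod.snd '' {z : Icc t 0 × X | ϕ z.1 z.2 ∈ ϕ.immediateExitSet N} := by
      ext x; simp [B]
    rw [this]
    have : CompactSpace (Icc t 0) := isCompact_iff_compactSpace.1 isCompact_Icc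
    exact isClosedMap_snd_of_compactSpace _
      (hE.preimage (ϕ.continuous (continuous_subtype_val.comp continuous_fst) continuous_snd))
  have hsub : Nᶜ ∩ U ⊆ B := by
    intro x ⟨hxN, hxU⟩
    have hback : ϕ (-t) (ϕ t x) ∉ N := by rwa [← map_add, neg_add_cancel, map_zero_apply]
    obtain ⟨s, ⟨hs0, hsT⟩, hs⟩ :=
      exists_mem_immediateExitSet_of_notMem hN (interior_subset hxU) (neg_nonneg.2 ht) hback
    exact ⟨s + t, ⟨by linarith, by linarith⟩, by rwa [map_add]⟩
  exact hB.closure_subset_iff.2 hsub (hU.closure_inter ⟨hq, htq⟩)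

end Flow

theorem stmt5_general {X : Type*} [MetricSpace X]
    (φ : ℝ → X → X)
    (hφcont : Continuous fun q : ℝ × X => φ q.1 q.2)
    (hφzero : ∀ p, φ 0 p = p)
    (hφadd : ∀ s t p, φ (s + t) p = φ s (φ t p))
    (N : Set X) (hN : IsCompact N)
    (hclosed : IsClosed {p ∈ N | ∀ ε : ℝ, 0 < ε → ¬ ∀ s ∈ Icc (0:ℝ) ε, φ s p ∈ N})
    (p : X) (hp : p ∈ frontier N)
    (h : ∀ ε : ℝ, 0 < ε → ∃ t : ℝ, -ε < t ∧ t ≤ 0 ∧ φ t p ∈ interior N) :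
    p ∈ {p ∈ N | ∀ ε : ℝ, 0 < ε → ¬ ∀ s ∈ Icc (0:ℝ) ε, φ s p ∈ N} := by
  let ϕ : Flow ℝ X := ⟨φ, hφcont, hφadd, hφzero⟩
  change IsClosed (ϕ.immediateExitSet N) at hclosed
  change p ∈ ϕ.immediateExitSet N
  have hp_compl : p ∈ closure Nᶜ := (frontier_eq_closure_inter_closure.subset hp).2
  have hexit : 0 ∈ closure {r : ℝ | ϕ r p ∈ ϕ.immediateExitSet N} := by
    refine Metric.mem_closure_iff.2 fun ε hε => ?_
    obtain ⟨t, hεt, ht0, htN⟩ := h ε hε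
    obtain ⟨r, ⟨htr, hr0⟩, hr⟩ :=
      Flow.exists_mem_immediateExitSet_of_mem_closure_compl hN.isClosed hclosed hp_compl ht0 htN
    exact ⟨r, hr, by rw [dist_comm, Real.dist_0_eq_abs, abs_of_nonpos hr0]; linarith⟩
  simpa [Flow.map_zero_apply] using
    (hclosed.preimage (ϕ.continuous continuous_id continuous_const)).closure_subset hexit

/-- If `N^o` is closed, `p ∈ fr N` and every interval `φ(p,(-ε,0])` meets `int N`,
then `p` is an immediate exit point: `p ∈ N^o` (equivalently `t^o(p) = 0`). -/
theorem stmt5 {X : Type*} [MetricSpace X]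
    (φ : ℝ → X → X)
    (hφcont : Continuous fun q : ℝ × X => φ q.1 q.2)
    (hφzero : ∀ p, φ 0 p = p)
    (hφadd : ∀ s t p, φ (s + t) p = φ s (φ t p))
    (N : Set X) (hN : IsCompact N)
    (hiso : ∀ p ∈ frontier N, ¬ ∀ t : ℝ, φ t p ∈ N)
    (hclosed : IsClosed {p ∈ N | ∀ ε : ℝ, 0 < ε → ¬ ∀ s ∈ Icc (0:ℝ) ε, φ s p ∈ N})
    (p : X) (hp : p ∈ frontier N)
    (h : ∀ ε : ℝ, 0 < ε → ∃ t : ℝ, -ε < t ∧ t ≤ 0 ∧ φ t p ∈ interior N) :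
    p ∈ {p ∈ N | ∀ ε : ℝ, 0 < ε → ¬ ∀ s ∈ Icc (0:ℝ) ε, φ s p ∈ N} :=
  stmt5_general φ hφcont hφzero hφadd N hN hclosed p hp h
end

section
/- Let N be an isolating neighbourhood with closed immediate exit set N^o. Then for every p ∈ N there exists t ∈ [t^i(p), t^o(p)] such that φ(p,s) ∈ fr N for all s ∈ (t^i(p), t) and φ(p,s) ∈ int N for all s ∈ (t, t^o(p)). -/
open Set

/-- Structure of maximal trajectory segments in an isolating neighbourhood with closed
exit set: every segment first travels in the frontier and then in the interior. -/
theorem stmt6 {X : Type*} [MetricSpace X]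
    (φ : ℝ → X → X)
    (hφcont : Continuous fun q : ℝ × X => φ q.1 q.2)
    (hφzero : ∀ p, φ 0 p = p)
    (hφadd : ∀ s t p, φ (s + t) p = φ s (φ t p))
    (N : Set X) (hN : IsCompact N)
    (hiso : ∀ p ∈ frontier N, ¬ ∀ t : ℝ, φ t p ∈ N)
    (tI tO : X → EReal)
    (htI : ∀ p, tI p = ⨅ r ∈ {r : ℝ | r ≤ 0 ∧ ∀ s ∈ Icc r (0:ℝ), φ s p ∈ N}, (r : EReal))
    (htO : ∀ p, tO p = ⨆ r ∈ {r : ℝ | 0 ≤ r ∧ ∀ s ∈ Icc (0:ℝ) r, φ s p ∈ N}, (r : EReal))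
    (hclosed : IsClosed {p ∈ N | tO p = 0})
    (p : X) (hpN : p ∈ N) :
    ∃ t : EReal, tI p ≤ t ∧ t ≤ tO p ∧
      (∀ s : ℝ, tI p < (s : EReal) → (s : EReal) < t → φ s p ∈ frontier N) ∧
      (∀ s : ℝ, t < (s : EReal) → (s : EReal) < tO p → φ s p ∈ interior N) := by
  classical
  -- basic facts about tI, tO
  have h0O : ∀ q, q ∈ N → (0 : EReal) ≤ tO q := by
    intro q hq
    rw [htO q]
    have h0 : (0:ℝ) ∈ {r : ℝ | 0 ≤ r ∧ ∀ s ∈ Icc (0:ℝ) r, φ s q ∈ N} := by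
      refine ⟨le_refl _, ?_⟩
      intro s hs
      have : s = 0 := le_antisymm hs.2 hs.1
      simpa [this, hφzero] using hq
    have := le_iSup₂ (f := fun (r : ℝ) (_ : r ∈ _) => (r : EReal)) 0 h0
    simpa using this
  have h0I : ∀ q, q ∈ N → tI q ≤ (0 : EReal) := by
    intro q hq
    rw [htI q]
    have h0 : (0:ℝ) ∈ {r : ℝ | r ≤ 0 ∧ ∀ s ∈ Icc r (0:ℝ), φ s q ∈ N} := by
      refine ⟨le_refl _, ?_⟩
      intro s hs
      have : s = 0 := le_antisymm hs.2 hs.1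
      simpa [this, hφzero] using hq
    have := iInf₂_le (f := fun (r : ℝ) (_ : r ∈ _) => (r : EReal)) 0 h0
    simpa using this
  -- points strictly between tI and tO stay in N
  have hseg : ∀ q, q ∈ N → ∀ v : ℝ, tI q < (v : EReal) → (v : EReal) < tO q → φ v q ∈ N := by
    intro q hq v hv1 hv2
    rcases le_or_gt 0 v with h | h
    · rw [htO q] at hv2
      obtain ⟨r, hr⟩ := lt_iSup_iff.mp hv2
      obtain ⟨hrS, hvr⟩ := lt_iSup_iff.mp hr
      exact hrS.2 v ⟨h, (EReal.coe_lt_coe_iff.mp hvr).le⟩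
    · rw [htI q] at hv1
      obtain ⟨r, hr⟩ := iInf_lt_iff.mp hv1
      obtain ⟨hrS, hrv⟩ := iInf_lt_iff.mp hr
      exact hrS.2 v ⟨(EReal.coe_lt_coe_iff.mp hrv).le, h.le⟩
  -- Key claim: interior cannot be followed by frontier within the segment
  have claimA : ∀ s1 s2 : ℝ, tI p < (s1 : EReal) → s1 < s2 → (s2 : EReal) < tO p →
      φ s1 p ∈ interior N → φ s2 p ∉ frontier N := by
    intro s1 s2 hs1 hs12 hs2 hint hfr
    set a : ℝ := s1 - s2 with ha
    set q2 : X := φ s2 p with hq2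
    have hq2N : q2 ∈ N := by
      rcases frontier_subset_closure hfr with h
      rwa [hN.isClosed.closure_eq] at h
    -- an admissible forward time beyond s2
    have hs2' := hs2
    rw [htO p] at hs2'
    obtain ⟨r', hr'⟩ := lt_iSup_iff.mp hs2'
    obtain ⟨hr'S, hs2r'⟩ := lt_iSup_iff.mp hr'
    have hs2r : s2 < r' := EReal.coe_lt_coe_iff.mp hs2r'
    -- the compact trajectory piece avoids the exit set E
    have hKE : ∀ s ∈ Icc a (0:ℝ), φ s q2 ∉ {p ∈ N | tO p = 0} := by
      intro s hs hmem
      have hEtO : tO (φ s q2) = 0 := hmem.2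
      have hrpos : (0:ℝ) < r' - (s + s2) := by
        have := hs.2
        linarith
      have hflow : ∀ u : ℝ, φ u (φ s q2) = φ (u + (s + s2)) p := by
        intro u
        rw [hq2, ← hφadd s s2 p, ← hφadd u (s + s2) p]
      have hrS : (r' - (s + s2)) ∈ {r : ℝ | 0 ≤ r ∧ ∀ u ∈ Icc (0:ℝ) r, φ u (φ s q2) ∈ N} := by
        refine ⟨hrpos.le, ?_⟩
        intro u hu
        rw [hflow u]
        set v : ℝ := u + (s + s2) with hv
        rcases le_or_gt 0 v with h | h
        · exact hr'S.2 v ⟨h, by simp only [hv]; linarith [hu.2]⟩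
        · apply hseg p hpN v
          · have hs1v : s1 ≤ v := by
              have := hs.1
              have := hu.1
              simp only [hv]
              linarith
            exact lt_of_lt_of_le hs1 (EReal.coe_le_coe_iff.mpr hs1v)
          · calc (v : EReal) < ((0:ℝ) : EReal) := EReal.coe_lt_coe_iff.mpr h
              _ = (0 : EReal) := by norm_num
              _ ≤ tO p := h0O p hpN
      have hle : ((r' - (s + s2) : ℝ) : EReal) ≤ tO (φ s q2) := by
        rw [htO (φ s q2)]
        exact le_iSup₂ (f := fun (r : ℝ) (_ : r ∈ _) => (r : EReal)) _ hrS
      rw [hEtO] at hle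
      have : r' - (s + s2) ≤ 0 := by
        have h0 : ((r' - (s + s2) : ℝ) : EReal) ≤ ((0:ℝ) : EReal) := by simpa using hle
        exact EReal.coe_le_coe_iff.mp h0
      linarith
    -- tube lemma around the trajectory piece
    have hopen : IsOpen ((fun z : ℝ × X => φ z.1 z.2) ⁻¹' {p ∈ N | tO p = 0}ᶜ) :=
      hclosed.isOpen_compl.preimage hφcont
    have hsub : Icc a (0:ℝ) ×ˢ ({q2} : Set X) ⊆
        (fun z : ℝ × X => φ z.1 z.2) ⁻¹' {p ∈ N | tO p = 0}ᶜ := by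
      rintro ⟨s, x⟩ ⟨hs, hx⟩
      simp only [mem_singleton_iff] at hx
      subst hx
      exact hKE s hs
    obtain ⟨U, V, hUo, hVo, hUsub, hVsub, hUV⟩ :=
      generalized_tube_lemma isCompact_Icc isCompact_singleton hopen hsub
    -- pick a point outside N close to q2
    have ha2 : a + s2 = s1 := by ring
    have hq2int : φ a q2 ∈ interior N := by
      rw [hq2, ← hφadd a s2 p, ha2]
      exact hint
    have hWopen : IsOpen (V ∩ (fun x => φ a x) ⁻¹' interior N) := by
      refine hVo.inter (isOpen_interior.preimage ?_)
      exact hφcont.comp (continuous_const.prodMk continuous_id)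
    have hq2W : q2 ∈ V ∩ (fun x => φ a x) ⁻¹' interior N :=
      ⟨hVsub rfl, hq2int⟩
    have hq2cl : q2 ∈ closure Nᶜ := by
      rw [frontier_eq_closure_inter_closure] at hfr
      exact hfr.2
    obtain ⟨x, hxW, hxN⟩ :=
      mem_closure_iff.mp hq2cl _ hWopen hq2W
    -- last time before 0 at which x's backward trajectory is in N
    set S : Set ℝ := Icc a 0 ∩ (fun s => φ s x) ⁻¹' N with hS
    have hcontx : Continuous fun s : ℝ => φ s x :=
      hφcont.comp (continuous_id.prodMk continuous_const)
    have hSclosed : IsClosed S := isClosed_Icc.inter (hN.isClosed.preimage hcontx)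
    have ha0 : a < 0 := by simp only [ha]; linarith
    have haS : a ∈ S := ⟨⟨le_refl _, ha0.le⟩, show φ a x ∈ N from interior_subset hxW.2⟩
    have hSne : S.Nonempty := ⟨a, haS⟩
    have hSbdd : BddAbove S := ⟨0, fun s hs => hs.1.2⟩
    set σ : ℝ := sSup S with hσ
    have hσS : σ ∈ S := hSclosed.csSup_mem hSne hSbdd
    have hσ0 : σ < 0 := by
      rcases lt_or_eq_of_le hσS.1.2 with h | h
      · exact h
      · exfalso
        have : φ σ x ∈ N := hσS.2
        rw [h, hφzero] at this
        exact hxN this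
    set y : X := φ σ x with hy
    have hyN : y ∈ N := hσS.2
    -- y is in the exit set
    have htOy : tO y = 0 := by
      rw [htO y]
      apply le_antisymm
      · apply iSup₂_le
        intro r hr
        by_contra hcon
        push_neg at hcon
        have hr0 : (0:ℝ) < r := by
          have : ((0:ℝ) : EReal) < (r : EReal) := by simpa using hcon
          exact EReal.coe_lt_coe_iff.mp this
        set u : ℝ := min r (-σ) with hu
        have hu0 : 0 < u := lt_min hr0 (by linarith)
        have huy : φ u y ∈ N := hr.2 u ⟨hu0.le, min_le_left _ _⟩
        have : φ u y = φ (u + σ) x := by rw [hy, ← hφadd u σ x]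
        rw [this] at huy
        have huσS : u + σ ∈ S := by
          refine ⟨⟨?_, ?_⟩, huy⟩
          · have : a ≤ σ := hσS.1.1
            linarith
          · have : u ≤ -σ := min_le_right _ _
            linarith
        have : u + σ ≤ σ := le_csSup hSbdd huσS
        linarith
      · have h0 : (0:ℝ) ∈ {r : ℝ | 0 ≤ r ∧ ∀ s ∈ Icc (0:ℝ) r, φ s y ∈ N} := by
          refine ⟨le_refl _, ?_⟩
          intro s hs
          have : s = 0 := le_antisymm hs.2 hs.1
          simpa [this, hφzero] using hyN
        have := le_iSup₂ (f := fun (r : ℝ) (_ : r ∈ _) => (r : EReal)) 0 h0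
        simpa using this
    have hyE : y ∈ {p ∈ N | tO p = 0} := ⟨hyN, htOy⟩
    -- contradiction with the tube
    have hσU : (σ, x) ∈ U ×ˢ V := ⟨hUsub hσS.1, hxW.1⟩
    exact (hUV hσU) hyE
  -- assemble the answer
  set T : Set ℝ := {s : ℝ | tI p < (s : EReal) ∧ (s : EReal) < tO p ∧ φ s p ∈ interior N}
    with hT
  refine ⟨min (tO p) (⨅ s ∈ T, (s : EReal)), ?_, min_le_left _ _, ?_, ?_⟩
  · refine le_min ((h0I p hpN).trans (h0O p hpN)) ?_
    exact le_iInf₂ fun s hs => hs.1.le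
  · intro s h1 h2
    have hstO : (s : EReal) < tO p := lt_of_lt_of_le h2 (min_le_left _ _)
    have hsN : φ s p ∈ N := hseg p hpN s h1 hstO
    have hnotint : φ s p ∉ interior N := by
      intro hint
      have hsT : s ∈ T := ⟨h1, hstO, hint⟩
      have : (⨅ s ∈ T, (s : EReal)) ≤ (s : EReal) :=
        iInf₂_le (f := fun (r : ℝ) (_ : r ∈ T) => (r : EReal)) s hsT
      have := lt_of_lt_of_le h2 (min_le_right _ _)
      exact absurd ‹(⨅ s ∈ T, (s : EReal)) ≤ (s : EReal)› (not_le.mpr this)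
    rw [hN.isClosed.frontier_eq]
    exact ⟨hsN, hnotint⟩
  · intro s h1 h2
    have htIs : tI p < (s : EReal) := by
      refine lt_of_le_of_lt ?_ h1
      refine le_min ((h0I p hpN).trans (h0O p hpN)) ?_
      exact le_iInf₂ fun r hr => hr.1.le
    have hsN : φ s p ∈ N := hseg p hpN s htIs h2
    have hIlt : (⨅ s ∈ T, (s : EReal)) < (s : EReal) := by
      rcases min_lt_iff.mp h1 with h | h
      · exact absurd h2 (not_lt.mpr h.le)
      · exact h
    obtain ⟨s0, hs0⟩ := iInf_lt_iff.mp hIlt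
    obtain ⟨hs0T, hs0lt⟩ := iInf_lt_iff.mp hs0
    have hs0s : s0 < s := EReal.coe_lt_coe_iff.mp hs0lt
    have hnotfr : φ s p ∉ frontier N := claimA s0 s hs0T.1 hs0s h2 hs0T.2.2
    rcases (hN.isClosed.frontier_eq ▸ hnotfr : φ s p ∉ N \ interior N) with h
    by_contra hcon
    exact h ⟨hsN, hcon⟩
end

section
/- Let N be an isolating neighbourhood for a continuous flow, O an open subset of fr N consisting entirely of transverse entry points, and p ∈ O. Then there exist a neighbourhood V ⊆ O of p in fr N and δ > 0 such that the flow map φ restricted to V × (-δ,δ) is a homeomorphism onto its image U = φ(V × (-δ,δ)), U is an open neighbourhood of p in the phase space, and U ∩ N = φ(V × [0,δ)). -/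
/-!
By compactness of the time interval, the orbit segments of length `ε / 2` through frontier
points near `p` meet `frontier N` only inside `O`; these points form the section `V`. Along such
a segment every crossing of `frontier N` is a transverse entry, so a first-exit argument keeps
the orbit of `q ∈ V` outside `N` for small negative times and inside `interior N` for small
positive times. Hence an orbit meets `V` at most once within a short time, which gives
injectivity of the flow map on the box and the description of `U ∩ N`. A point `x` near `q ∈ V`
has `φ (-η) x ∉ N` and `φ η x ∈ interior N`, so its orbit crosses `frontier N` at some time in
`[-η, η]`, by the tube lemma inside any prescribed neighbourhood of `q`; this makes the flow
map open on the box, hence a homeomorphism onto its image.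
-/

open Set Filter Topology Function

section

variable {X : Type*} [TopologicalSpace X]

theorem exists_mem_frontier_of_mem_interior_of_notMem_interior {f : ℝ → X} (hf : Continuous f)
    {S : Set X} {a b : ℝ} (hab : a ≤ b) (ha : f a ∈ interior S) (hb : f b ∉ interior S) :
    ∃ t ∈ Ioc a b, f t ∈ frontier S ∧ ∀ s ∈ Ico a t, f s ∈ interior S := by
  set T := Icc a b ∩ f ⁻¹' (interior S)ᶜ
  have hT : IsClosed T := isClosed_Icc.inter (isOpen_interior.isClosed_compl.preimage hf)
  have hTbdd : BddBelow T := ⟨a, fun s hs => hs.1.1⟩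
  have htT : sInf T ∈ T := hT.csInf_mem ⟨b, ⟨hab, le_rfl⟩, hb⟩ hTbdd
  have hbefore : ∀ s ∈ Ico a (sInf T), f s ∈ interior S := fun s hs => by
    by_contra hs'
    exact (csInf_le hTbdd ⟨⟨hs.1, hs.2.le.trans htT.1.2⟩, hs'⟩).not_gt hs.2
  have hat : a < sInf T := htT.1.1.lt_of_ne fun h => htT.2 (h ▸ ha)
  have hcl : sInf T ∈ closure (Ico a (sInf T)) := by
    rw [closure_Ico hat.ne]; exact ⟨hat.le, le_rfl⟩
  have hclosure : f (sInf T) ∈ closure (interior S) :=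
    closure_mono (image_subset_iff.mpr hbefore : f '' Ico a (sInf T) ⊆ interior S)
      (image_closure_subset_closure_image hf (mem_image_of_mem f hcl))
  refine ⟨sInf T, ⟨hat, htT.1.2⟩, frontier_interior_subset ?_, hbefore⟩
  rw [frontier, interior_interior]
  exact ⟨hclosure, htT.2⟩

theorem mem_interior_of_forall_mem_frontier {f : ℝ → X} (hf : Continuous f) {S : Set X}
    {a b : ℝ} (hab : a ≤ b) (ha : f a ∈ interior S)
    (hentry : ∀ t ∈ Ioc a b, f t ∈ frontier S → ∃ ε > 0, ∀ s ∈ Ioo (t - ε) t, f s ∉ S) :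
    f b ∈ interior S := by
  by_contra hb
  obtain ⟨t, ht, hfr, hbefore⟩ :=
    exists_mem_frontier_of_mem_interior_of_notMem_interior hf hab ha hb
  obtain ⟨ε, hε, hout⟩ := hentry t ht hfr
  have hs : t - min ε (t - a) / 2 ∈ Ioo (t - ε) t := by
    constructor <;> linarith [min_le_left ε (t - a), lt_min hε (sub_pos.mpr ht.1)]
  exact hout _ hs <| interior_subset <| hbefore _
    ⟨by linarith [min_le_right ε (t - a), hs.2], hs.2⟩

end

namespace Flow

variable {X : Type*} [TopologicalSpace X]

theorem eventually_forall_mem_of_isCompact {τ : Type*} [TopologicalSpace τ] [AddZero τ]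
    (ϕ : Flow τ X) {K : Set τ} (hK : IsCompact K) {U : Set X} (hU : IsOpen U) {q : X}
    (h : ∀ t ∈ K, ϕ t q ∈ U) : ∀ᶠ x in 𝓝 q, ∀ t ∈ K, ϕ t x ∈ U :=
  hK.eventually_forall_of_forall_eventually fun t ht =>
    (ϕ.continuous continuous_snd continuous_fst).continuousAt.eventually_mem
      (hU.mem_nhds (h t ht))

variable {ϕ : Flow ℝ X} {N : Set X}

def IsTransverseEntry (ϕ : Flow ℝ X) (N : Set X) (q : X) : Prop :=
  ∃ ε : ℝ, 0 < ε ∧ (∀ t ∈ Ioo (-ε) (0 : ℝ), ϕ t q ∉ N) ∧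
    ∀ t ∈ Ioo (0 : ℝ) ε, ϕ t q ∈ interior N

theorem mem_interior_of_isTransverseEntry {q : X} (hq : IsTransverseEntry ϕ N q) {η : ℝ}
    (h : ∀ t ∈ Ioc 0 η, ϕ t q ∈ frontier N → IsTransverseEntry ϕ N (ϕ t q)) :
    ∀ t ∈ Ioc 0 η, ϕ t q ∈ interior N := by
  obtain ⟨ε, hε, -, hafter⟩ := hq
  intro t ht
  have ha : min t ε / 2 ∈ Ioo 0 ε := by
    constructor <;> linarith [min_le_right t ε, lt_min ht.1 hε]
  refine mem_interior_of_forall_mem_frontier (f := fun t => ϕ t q)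
    (ϕ.continuous continuous_id continuous_const)
    (by linarith [min_le_left t ε, lt_min ht.1 hε]) (hafter _ ha) fun s hs hfr => ?_
  obtain ⟨ε', hε', hbefore, -⟩ := h s ⟨ha.1.trans hs.1, hs.2.trans ht.2⟩ hfr
  refine ⟨ε', hε', fun r hr => ?_⟩
  rw [show r = (r - s) + s by ring, map_add]
  exact hbefore _ ⟨by linarith [hr.1], by linarith [hr.2]⟩

theorem notMem_of_isTransverseEntry (hN : IsClosed N) {q : X} (hq : IsTransverseEntry ϕ N q)
    {η : ℝ} (h : ∀ t ∈ Ico (-η) 0, ϕ t q ∈ frontier N → IsTransverseEntry ϕ N (ϕ t q)) :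
    ∀ t ∈ Ico (-η) 0, ϕ t q ∉ N := by
  obtain ⟨ε, hε, hbefore, -⟩ := hq
  intro t ht
  have ha : min (-t) ε / 2 ∈ Ioo 0 ε := by
    constructor <;> linarith [min_le_right (-t) ε, lt_min (neg_pos.mpr ht.2) hε]
  have hint : ϕ (-(-t)) q ∈ interior Nᶜ := by
    refine mem_interior_of_forall_mem_frontier (f := fun t => ϕ (-t) q) (S := Nᶜ)
      (a := min (-t) ε / 2) (ϕ.continuous continuous_neg continuous_const)
      (by linarith [min_le_left (-t) ε, lt_min (neg_pos.mpr ht.2) hε]) ?_ fun s hs hfr => ?_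
    · rw [hN.isOpen_compl.interior_eq]
      exact hbefore _ ⟨by linarith [ha.2], by linarith [ha.1]⟩
    · rw [frontier_compl] at hfr
      obtain ⟨ε', hε', -, hafter⟩ :=
        h (-s) ⟨by linarith [hs.2, ht.1], by linarith [ha.1, hs.1]⟩ hfr
      refine ⟨ε', hε', fun r hr => not_not.mpr <| interior_subset ?_⟩
      rw [show -r = (s - r) + -s by ring, map_add]
      exact hafter _ ⟨by linarith [hr.2], by linarith [hr.1]⟩
  rw [neg_neg] at hint
  exact interior_subset hint

structure IsEntrySection (ϕ : Flow ℝ X) (N V : Set X) (η : ℝ) : Prop where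
  subset_frontier : V ⊆ frontier N
  mem_interior : ∀ q ∈ V, ∀ t ∈ Ioc 0 η, ϕ t q ∈ interior N
  notMem : ∀ q ∈ V, ∀ t ∈ Ico (-η) 0, ϕ t q ∉ N

theorem isEntrySection_of_forall_isTransverseEntry (hN : IsClosed N) {V : Set X} {η : ℝ}
    (hη : 0 ≤ η) (hV : V ⊆ frontier N)
    (h : ∀ q ∈ V, ∀ t ∈ Icc (-η) η, ϕ t q ∈ frontier N → IsTransverseEntry ϕ N (ϕ t q)) :
    IsEntrySection ϕ N V η := by
  have hentry : ∀ q ∈ V, IsTransverseEntry ϕ N q := fun q hq => by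
    simpa only [map_zero_apply] using
      h q hq 0 ⟨by linarith, hη⟩ (by simpa only [map_zero_apply] using hV hq)
  exact ⟨hV,
    fun q hq => mem_interior_of_isTransverseEntry (hentry q hq)
      fun t ht => h q hq t ⟨by linarith [ht.1], ht.2⟩,
    fun q hq => notMem_of_isTransverseEntry hN (hentry q hq)
      fun t ht => h q hq t ⟨ht.1, by linarith [ht.2]⟩⟩

namespace IsEntrySection

variable {V : Set X} {η : ℝ}

theorem mono (h : IsEntrySection ϕ N V η) {V' : Set X} {η' : ℝ} (hV : V' ⊆ V) (hη : η' ≤ η) :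
    IsEntrySection ϕ N V' η' where
  subset_frontier := hV.trans h.subset_frontier
  mem_interior q hq t ht := h.mem_interior q (hV hq) t ⟨ht.1, ht.2.trans hη⟩
  notMem q hq t ht := h.notMem q (hV hq) t ⟨by linarith [ht.1], ht.2⟩

theorem eq_zero_of_mem_frontier (hN : IsClosed N) (h : IsEntrySection ϕ N V η) {q : X}
    (hq : q ∈ V) {t : ℝ} (ht : t ∈ Icc (-η) η) (hfr : ϕ t q ∈ frontier N) : t = 0 := by
  rcases lt_trichotomy t 0 with hneg | hzero | hpos
  · exact absurd (hN.frontier_subset hfr) (h.notMem q hq t ⟨ht.1, hneg⟩)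
  · exact hzero
  · exact absurd hfr (disjoint_left.mp disjoint_interior_frontier
      (h.mem_interior q hq t ⟨hpos, ht.2⟩))

theorem injOn (hN : IsClosed N) {δ : ℝ} (h : IsEntrySection ϕ N V (2 * δ)) :
    InjOn (uncurry ϕ) (Ioo (-δ) δ ×ˢ V) := by
  rintro ⟨t, q⟩ ⟨ht, hq⟩ ⟨s, q'⟩ ⟨hs, hq'⟩ (heq : ϕ t q = ϕ s q')
  have hshift : ϕ (t - s) q = q' := by
    rw [sub_eq_neg_add, map_add, heq, ← map_add, neg_add_cancel, map_zero_apply]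
  have hts : t - s = 0 := h.eq_zero_of_mem_frontier hN hq
    ⟨by linarith [ht.1, hs.2], by linarith [ht.2, hs.1]⟩ (hshift ▸ h.subset_frontier hq')
  rw [hts, map_zero_apply] at hshift
  rw [sub_eq_zero.mp hts, hshift]

theorem image_inter (hN : IsClosed N) (h : IsEntrySection ϕ N V η) :
    uncurry ϕ '' (Ioo (-η) η ×ˢ V) ∩ N = uncurry ϕ '' (Ico 0 η ×ˢ V) := by
  ext x
  constructor
  · rintro ⟨⟨⟨t, q⟩, ⟨ht, hq⟩, rfl⟩, hxN⟩
    have ht0 : 0 ≤ t := not_lt.mp fun hneg => h.notMem q hq t ⟨ht.1.le, hneg⟩ hxN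
    exact ⟨(t, q), ⟨⟨ht0, ht.2⟩, hq⟩, rfl⟩
  · rintro ⟨⟨t, q⟩, ⟨ht, hq⟩, rfl⟩
    refine ⟨⟨(t, q), ⟨⟨by linarith [ht.1, ht.2], ht.2⟩, hq⟩, rfl⟩, ?_⟩
    rcases ht.1.eq_or_lt with rfl | hpos
    · simpa only [uncurry_apply_pair, map_zero_apply] using
        hN.frontier_subset (h.subset_frontier hq)
    · exact interior_subset (h.mem_interior q hq t ⟨hpos, ht.2.le⟩)

variable {G : Set X}

theorem eventually_exists_apply_eq (hN : IsClosed N) (hG : IsOpen G)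
    (h : IsEntrySection ϕ N (G ∩ frontier N) η) (hη : 0 < η) {q : X}
    (hq : q ∈ G ∩ frontier N) :
    ∀ᶠ x in 𝓝 q, ∃ t ∈ Icc (-η) η, ∃ y ∈ G ∩ frontier N, ϕ t y = x := by
  have hmiss : ∀ᶠ x in 𝓝 q, ∀ t ∈ Icc (-η) η, ϕ t x ∈ (frontier N \ G)ᶜ := by
    refine ϕ.eventually_forall_mem_of_isCompact isCompact_Icc
      (isClosed_frontier.sdiff hG).isOpen_compl fun t ht ⟨hfr, hnG⟩ => hnG ?_
    rw [h.eq_zero_of_mem_frontier hN hq ht hfr, map_zero_apply]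
    exact hq.1
  have hin : ∀ᶠ x in 𝓝 q, ϕ η x ∈ interior N :=
    (ϕ.continuous_toFun η).continuousAt.eventually_mem
      (isOpen_interior.mem_nhds (h.mem_interior q hq η ⟨hη, le_rfl⟩))
  have hout : ∀ᶠ x in 𝓝 q, ϕ (-η) x ∈ Nᶜ :=
    (ϕ.continuous_toFun (-η)).continuousAt.eventually_mem
      (hN.isOpen_compl.mem_nhds (h.notMem q hq (-η) ⟨le_rfl, by linarith⟩))
  filter_upwards [hmiss, hin, hout] with x hmiss hin hout
  obtain ⟨t, ht, hfr, -⟩ := exists_mem_frontier_of_mem_interior_of_notMem_interior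
    (f := fun t => ϕ t x) (S := Nᶜ) (a := -η) (b := η)
    (ϕ.continuous continuous_id continuous_const)
    (by linarith) (by rwa [hN.isOpen_compl.interior_eq])
    (fun hb => interior_subset hb (interior_subset hin))
  rw [frontier_compl] at hfr
  have hG : ϕ t x ∈ G := not_not.mp fun hnG => hmiss t ⟨ht.1.le, ht.2⟩ ⟨hfr, hnG⟩
  refine ⟨-t, ⟨by linarith [ht.2], by linarith [ht.1]⟩, ϕ t x, ⟨hG, hfr⟩, ?_⟩
  rw [← map_add, neg_add_cancel, map_zero_apply]

theorem image_mem_nhds (hN : IsClosed N) (hG : IsOpen G)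
    (h : IsEntrySection ϕ N (G ∩ frontier N) η) (hη : 0 < η) {q : X}
    (hq : q ∈ G ∩ frontier N) (t₀ : ℝ) :
    uncurry ϕ '' (Icc (t₀ - η) (t₀ + η) ×ˢ (G ∩ frontier N)) ∈ 𝓝 (ϕ t₀ q) := by
  refine mem_of_superset ((ϕ.toHomeomorph t₀).isOpenMap.image_mem_nhds
    (h.eventually_exists_apply_eq hN hG hη hq)) ?_
  rintro _ ⟨_, ⟨t, ht, y, hy, rfl⟩, rfl⟩
  exact ⟨(t₀ + t, y), ⟨⟨by linarith [ht.1], by linarith [ht.2]⟩, hy⟩, map_add _ _ _ _⟩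

theorem isOpenMap_domRestrict (hN : IsClosed N) (hG : IsOpen G)
    (h : IsEntrySection ϕ N (G ∩ frontier N) η) :
    IsOpenMap ((Ioo (-η) η ×ˢ (G ∩ frontier N)).domRestrict (uncurry ϕ)) := by
  refine IsOpenMap.of_nhds_le fun ⟨(t₀, q), ht₀, hq⟩ s hs => ?_
  obtain ⟨u, hu, hus⟩ := (mem_nhds_subtype _ _ _).mp hs
  obtain ⟨I, hI, G', hG', hIG'⟩ := mem_nhds_prod_iff.mp hu
  obtain ⟨α, hα, hαI⟩ := Metric.nhds_basis_closedBall.mem_iff.mp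
    (inter_mem hI (isOpen_Ioo.mem_nhds ht₀))
  obtain ⟨G'', hG''G', hG'', hqG''⟩ := mem_nhds_iff.mp hG'
  rw [Real.closedBall_eq_Icc] at hαI
  have hαη : α ≤ η := by
    have h₁ := (hαI ⟨le_rfl, by linarith⟩).2
    have h₂ := (hαI ⟨by linarith, le_rfl⟩).2
    linarith [h₁.1, h₂.2]
  have hsub : (G ∩ G'') ∩ frontier N ⊆ G ∩ frontier N := fun y hy => ⟨hy.1.1, hy.2⟩
  refine mem_of_superset ((h.mono hsub hαη).image_mem_nhds hN (hG.inter hG'') hα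
    ⟨⟨hq.1, hqG''⟩, hq.2⟩ t₀) ?_
  rintro _ ⟨⟨t, y⟩, ⟨ht, hy⟩, rfl⟩
  exact hus (show (⟨(t, y), (hαI ht).2, hsub hy⟩ : Ioo (-η) η ×ˢ (G ∩ frontier N)) ∈ _ from
    hIG' ⟨(hαI ht).1, hG''G' hy.1.2⟩)

end IsEntrySection

end Flow

theorem stmt8_general {X : Type*} [MetricSpace X]
    (φ : ℝ → X → X)
    (hφcont : Continuous fun q : ℝ × X => φ q.1 q.2)
    (hφzero : ∀ p, φ 0 p = p)
    (hφadd : ∀ s t p, φ (s + t) p = φ s (φ t p))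
    (N : Set X) (hN : IsCompact N)
    (O : Set X)
    (hOopen : ∃ W : Set X, IsOpen W ∧ O = W ∩ frontier N)
    (htrans : ∀ q ∈ O, ∃ ε : ℝ, 0 < ε ∧ (∀ t ∈ Ioo (-ε) (0:ℝ), φ t q ∉ N) ∧
      (∀ t ∈ Ioo (0:ℝ) ε, φ t q ∈ interior N))
    (p : X) (hp : p ∈ O) :
    ∃ (V : Set X) (δ : ℝ), 0 < δ ∧ V ⊆ O ∧ V ∈ nhdsWithin p (frontier N) ∧
      InjOn (fun q : ℝ × X => φ q.1 q.2) (Ioo (-δ) δ ×ˢ V) ∧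
      IsOpen ((fun q : ℝ × X => φ q.1 q.2) '' (Ioo (-δ) δ ×ˢ V)) ∧
      p ∈ (fun q : ℝ × X => φ q.1 q.2) '' (Ioo (-δ) δ ×ˢ V) ∧
      (fun q : ℝ × X => φ q.1 q.2) '' (Ioo (-δ) δ ×ˢ V) ∩ N
        = (fun q : ℝ × X => φ q.1 q.2) '' (Ico 0 δ ×ˢ V) ∧
      ∃ e : (Ioo (-δ) δ ×ˢ V : Set (ℝ × X)) ≃ₜ
          ((fun q : ℝ × X => φ q.1 q.2) '' (Ioo (-δ) δ ×ˢ V) : Set X),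
        ∀ x : (Ioo (-δ) δ ×ˢ V : Set (ℝ × X)), (e x : X) = φ (x : ℝ × X).1 (x : ℝ × X).2 := by
  let ϕ : Flow ℝ X := ⟨φ, hφcont, hφadd, hφzero⟩
  obtain ⟨W, hW, rfl⟩ := hOopen
  obtain ⟨ε, hε, hbefore, hafter⟩ := htrans p hp
  have hp_avoid : ∀ t ∈ Icc (-(ε / 2)) (ε / 2), ϕ t p ∈ (frontier N \ W)ᶜ := by
    rintro t ht ⟨hfr, hnW⟩
    rcases lt_trichotomy t 0 with hneg | rfl | hpos
    · exact hbefore t ⟨by linarith [ht.1], hneg⟩ (hN.isClosed.frontier_subset hfr)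
    · exact hnW (by rw [ϕ.map_zero_apply]; exact hp.1)
    · exact disjoint_left.mp disjoint_interior_frontier
        (hafter t ⟨hpos, by linarith [ht.2]⟩) hfr
  obtain ⟨G, hGavoid, hG, hpG⟩ := eventually_nhds_iff.mp <|
    ϕ.eventually_forall_mem_of_isCompact isCompact_Icc
      (isClosed_frontier.sdiff hW).isOpen_compl hp_avoid
  have hsec : ϕ.IsEntrySection N ((W ∩ G) ∩ frontier N) (2 * (ε / 4)) :=
    Flow.isEntrySection_of_forall_isTransverseEntry hN.isClosed (by linarith)
      inter_subset_right
      fun q hq t ht hfr => htrans _ ⟨not_not.mp fun hnW => hGavoid q hq.1.2 t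
        ⟨by linarith [ht.1], by linarith [ht.2]⟩ ⟨hfr, hnW⟩, hfr⟩
  have hsec' : ϕ.IsEntrySection N ((W ∩ G) ∩ frontier N) (ε / 4) :=
    hsec.mono subset_rfl (by linarith)
  have hopen := hsec'.isOpenMap_domRestrict hN.isClosed (hW.inter hG)
  have hemb := IsOpenEmbedding.of_continuous_injective_isOpenMap
    ϕ.cont'.continuousOn.domRestrict (injOn_iff_injective.mp (hsec.injOn hN.isClosed)) hopen
  refine ⟨(W ∩ G) ∩ frontier N, ε / 4, by linarith, fun q hq => ⟨hq.1.1, hq.2⟩,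
    mem_nhdsWithin.mpr ⟨W ∩ G, hW.inter hG, ⟨hp.1, hpG⟩, subset_rfl⟩,
    hsec.injOn hN.isClosed, range_domRestrict (uncurry ϕ) _ ▸ hopen.isOpen_range,
    ⟨(0, p), ⟨⟨by linarith, by linarith⟩, ⟨hp.1, hpG⟩, hp.2⟩, hφzero p⟩,
    hsec'.image_inter hN.isClosed,
    hemb.isEmbedding.toHomeomorph.trans (.setCongr (range_domRestrict _ _)), fun _ => rfl⟩

/-- Local product (flow-box) structure near a transverse entry point of an
isolating neighbourhood: there are a neighbourhood `V ⊆ O` of `p` in `fr N` and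
`δ > 0` such that the flow is a homeomorphism of `V × (-δ,δ)` onto an open
neighbourhood `U` of `p`, and `U ∩ N = φ(V × [0,δ))`. -/
theorem stmt8 {X : Type*} [MetricSpace X]
    (φ : ℝ → X → X)
    (hφcont : Continuous fun q : ℝ × X => φ q.1 q.2)
    (hφzero : ∀ p, φ 0 p = p)
    (hφadd : ∀ s t p, φ (s + t) p = φ s (φ t p))
    (N : Set X) (hN : IsCompact N)
    (hiso : ∀ p ∈ frontier N, ¬ ∀ t : ℝ, φ t p ∈ N)
    (O : Set X) (hOsub : O ⊆ frontier N)
    (hOopen : ∃ W : Set X, IsOpen W ∧ O = W ∩ frontier N)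
    (htrans : ∀ q ∈ O, ∃ ε : ℝ, 0 < ε ∧ (∀ t ∈ Ioo (-ε) (0:ℝ), φ t q ∉ N) ∧
      (∀ t ∈ Ioo (0:ℝ) ε, φ t q ∈ interior N))
    (p : X) (hp : p ∈ O) :
    ∃ (V : Set X) (δ : ℝ), 0 < δ ∧ V ⊆ O ∧ V ∈ nhdsWithin p (frontier N) ∧
      InjOn (fun q : ℝ × X => φ q.1 q.2) (Ioo (-δ) δ ×ˢ V) ∧
      IsOpen ((fun q : ℝ × X => φ q.1 q.2) '' (Ioo (-δ) δ ×ˢ V)) ∧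
      p ∈ (fun q : ℝ × X => φ q.1 q.2) '' (Ioo (-δ) δ ×ˢ V) ∧
      (fun q : ℝ × X => φ q.1 q.2) '' (Ioo (-δ) δ ×ˢ V) ∩ N
        = (fun q : ℝ × X => φ q.1 q.2) '' (Ico 0 δ ×ˢ V) ∧
      ∃ e : (Ioo (-δ) δ ×ˢ V : Set (ℝ × X)) ≃ₜ
          ((fun q : ℝ × X => φ q.1 q.2) '' (Ioo (-δ) δ ×ˢ V) : Set X),
        ∀ x : (Ioo (-δ) δ ×ˢ V : Set (ℝ × X)), (e x : X) = φ (x : ℝ × X).1 (x : ℝ × X).2 :=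
  stmt8_general φ hφcont hφzero hφadd N hN O hOopen htrans p hp
end

section
/- Let N be an isolating neighbourhood whose maximal invariant set K is the disjoint union of two compact sets K₀ and K₁. Then N⁺ = {p ∈ N : φ(p,[0,∞)) ⊆ N} decomposes as the disjoint union of two compact positively invariant sets N₀⁺ and N₁⁺, where N_i⁺ consists exactly of the points of N⁺ whose ω-limit set is contained in K_i. -/
/-!
Separate `K₀` and `K₁` by disjoint open sets `U₀`, `U₁`. The compact set `N \ (U₀ ∪ U₁)` misses
`Inv(N)`, so there is a uniform `T` such that every point of it leaves `N` within time `T`,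
forwards or backwards. Hence for `p ∈ N⁺` the forward orbit of `p` after time `T` lies in
`U₀ ∪ U₁`, and being connected, in a single `Uᵢ`. The ω-limit set of `p` is a nonempty subset of
`Inv(N) = K₀ ∪ K₁` contained in `closure Uᵢ`, which misses `K₁₋ᵢ`, so it lies in `Kᵢ`.
Consequently `N₀⁺ = N⁺ ∩ φ_T⁻¹(U₁ᶜ)` is closed in the compact set `N`, and symmetrically for `N₁⁺`.
-/

open Set Filter omegaLimit

theorem omegaLimit_atTop_singleton_eq {α β : Type*} [TopologicalSpace β] (ϕ : ℝ → α → β)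
    (p : α) : ω⁺ ϕ {p} = ⋂ t ∈ Ici (0:ℝ), closure {x | ∃ s : ℝ, t ≤ s ∧ x = ϕ s p} := by
  have h_tail (t : ℝ) : image2 ϕ (Ici t) {p} = {x | ∃ s : ℝ, t ≤ s ∧ x = ϕ s p} := by
    ext x; simp [eq_comm]
  refine Subset.antisymm (fun x hx => mem_iInter₂.2 fun t _ => ?_) fun x hx => ?_
  · exact h_tail t ▸ omegaLimit_subset_closure_image2 _ _ _ (Ici_mem_atTop t) hx
  · refine mem_iInter₂.2 fun u hu => ?_
    obtain ⟨a, ha⟩ := mem_atTop_sets.1 hu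
    have hx' := mem_iInter₂.1 hx (max a 0) (le_max_right a 0)
    rw [← h_tail] at hx'
    exact closure_mono (image2_subset_right fun s hs => ha s (le_of_max_le_left hs)) hx'

namespace Flow

variable {X : Type*} [TopologicalSpace X] (ϕ : Flow ℝ X)

/-- The paper's `N⁺`. -/
def forwardTrapped (N : Set X) : Set X := {p ∈ N | ∀ t : ℝ, 0 ≤ t → ϕ t p ∈ N}

/-- The paper's `Inv(N)`. -/
def invariantPart (N : Set X) : Set X := {p ∈ N | ∀ t : ℝ, ϕ t p ∈ N}

/-- The paper's `Nᵢ⁺` for `K = Kᵢ`. -/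
def basin (N K : Set X) : Set X := {p ∈ ϕ.forwardTrapped N | ω⁺ ϕ {p} ⊆ K}

variable {ϕ} {N : Set X}

theorem mapsTo_forwardTrapped {t : ℝ} (ht : 0 ≤ t) :
    MapsTo (ϕ t) (ϕ.forwardTrapped N) (ϕ.forwardTrapped N) := fun p hp =>
  ⟨hp.2 t ht, fun s hs => ϕ.map_add s t p ▸ hp.2 (s + t) (add_nonneg hs ht)⟩

theorem isClosed_forwardTrapped (hN : IsClosed N) : IsClosed (ϕ.forwardTrapped N) := by
  have h : ϕ.forwardTrapped N = N ∩ ⋂ t ∈ Ici (0:ℝ), ϕ t ⁻¹' N := by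
    ext p; simp [forwardTrapped]
  rw [h]
  exact hN.inter (isClosed_biInter fun t _ => hN.preimage (ϕ.continuous_toFun t))

theorem omegaLimit_subset_of_mem_forwardTrapped (hN : IsClosed N) {p : X}
    (hp : p ∈ ϕ.forwardTrapped N) : ω⁺ ϕ {p} ⊆ N := by
  refine (omegaLimit_subset_closure_image2 _ _ _ (Ici_mem_atTop 0)).trans
    (closure_minimal ?_ hN)
  rintro _ ⟨t, ht, _, rfl, rfl⟩
  exact hp.2 t ht

theorem omegaLimit_subset_invariantPart (hN : IsClosed N) {p : X}
    (hp : p ∈ ϕ.forwardTrapped N) : ω⁺ ϕ {p} ⊆ ϕ.invariantPart N := fun _ hx =>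
  ⟨omegaLimit_subset_of_mem_forwardTrapped hN hp hx, fun t =>
    omegaLimit_subset_of_mem_forwardTrapped hN hp
      (ϕ.isInvariant_omegaLimit atTop {p}
        (fun t => tendsto_atTop_add_const_left _ t tendsto_id) t hx)⟩

theorem nonempty_omegaLimit_of_mem_forwardTrapped [T2Space X] (hN : IsCompact N) {p : X}
    (hp : p ∈ ϕ.forwardTrapped N) : (ω⁺ ϕ {p}).Nonempty := by
  refine nonempty_omegaLimit_of_isCompact_absorbing _ _ _ hN
    ⟨Ici 0, Ici_mem_atTop 0, closure_minimal ?_ hN.isClosed⟩ (singleton_nonempty p)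
  rintro _ ⟨t, ht, _, rfl, rfl⟩
  exact hp.2 t ht

theorem omegaLimit_singleton_apply (t : ℝ) (p : X) : ω⁺ ϕ {ϕ t p} = ω⁺ ϕ {p} := by
  rw [← image_singleton,
    ϕ.omegaLimit_image_eq _ _ (fun t => tendsto_atTop_add_const_right _ t tendsto_id)]


theorem mapsTo_basin {K : Set X} {t : ℝ} (ht : 0 ≤ t) :
    MapsTo (ϕ t) (ϕ.basin N K) (ϕ.basin N K) := fun p hp =>
  ⟨mapsTo_forwardTrapped ht hp.1, (omegaLimit_singleton_apply t p).symm ▸ hp.2⟩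

theorem disjoint_basin [T2Space X] (hN : IsCompact N) {K₀ K₁ : Set X} (hK : Disjoint K₀ K₁) :
    Disjoint (ϕ.basin N K₀) (ϕ.basin N K₁) := by
  refine disjoint_left.2 fun p hp₀ hp₁ => ?_
  obtain ⟨x, hx⟩ := nonempty_omegaLimit_of_mem_forwardTrapped hN hp₀.1
  exact disjoint_left.1 hK (hp₀.2 hx) (hp₁.2 hx)

theorem exists_forall_exit_of_isCompact (hN : IsClosed N) {C : Set X} (hC : IsCompact C)
    (hexit : ∀ x ∈ C, ∃ t, ϕ t x ∉ N) :
    ∃ T : ℝ, ∀ x ∈ C, ∃ t ∈ Icc (-T) T, ϕ t x ∉ N := by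
  let U : ℝ → Set X := fun T => ⋃ t ∈ Icc (-T) T, ϕ t ⁻¹' Nᶜ
  have hUo (T : ℝ) : IsOpen (U T) :=
    isOpen_biUnion fun t _ => hN.isOpen_compl.preimage (ϕ.continuous_toFun t)
  have hCU : C ⊆ ⋃ T, U T := fun x hx => by
    obtain ⟨t, ht⟩ := hexit x hx
    exact mem_iUnion.2 ⟨|t|, mem_iUnion₂.2 ⟨t, ⟨neg_abs_le t, le_abs_self t⟩, ht⟩⟩
  have hU_mono : Monotone U := fun T T' h =>
    biUnion_subset_biUnion_left (Icc_subset_Icc (neg_le_neg h) h)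
  obtain ⟨T, hT⟩ := hC.elim_directed_cover U hUo hCU hU_mono.directed_le
  exact ⟨T, fun x hx => by simpa [U] using hT hx⟩

theorem exists_forall_ge_mem_of_invariantPart_subset [T2Space X] (hN : IsCompact N)
    {U : Set X} (hU : IsOpen U) (hNU : ϕ.invariantPart N ⊆ U) :
    ∃ T : ℝ, ∀ p ∈ ϕ.forwardTrapped N, ∀ t, T ≤ t → ϕ t p ∈ U := by
  obtain ⟨T, hT⟩ := exists_forall_exit_of_isCompact hN.isClosed (hN.diff hU) fun x hx => by
    by_contra! h
    exact hx.2 (hNU ⟨hx.1, h⟩)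
  refine ⟨max T 0, fun p hp t ht => by_contra fun htU => ?_⟩
  obtain ⟨s, hs, hsN⟩ := hT (ϕ t p) ⟨hp.2 t (le_of_max_le_right ht), htU⟩
  exact hsN (ϕ.map_add s t p ▸ hp.2 (s + t) (by linarith [hs.1, le_of_max_le_left ht]))

theorem image2_Ici_subset_left {U V : Set X} (hU : IsOpen U) (hV : IsOpen V)
    (hUV : Disjoint U V) {p : X} {T : ℝ} (hT : ∀ t, T ≤ t → ϕ t p ∈ U ∪ V) (hTU : ϕ T p ∈ U) :
    image2 ϕ (Ici T) {p} ⊆ U := by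
  rw [image2_singleton_right]
  refine (isPreconnected_Ici.image _ (ϕ.continuous continuous_id continuous_const).continuousOn
    ).subset_left_of_subset_union hU hV hUV ?_ ⟨ϕ T p, ⟨T, self_mem_Ici, rfl⟩, hTU⟩
  rintro _ ⟨t, ht, rfl⟩
  exact hT t ht

theorem omegaLimit_subset_of_mem_left (hN : IsClosed N) {A B U V : Set X}
    (hK : ϕ.invariantPart N = A ∪ B) (hU : IsOpen U) (hV : IsOpen V) (hUV : Disjoint U V)
    (hBV : B ⊆ V) {p : X} (hp : p ∈ ϕ.forwardTrapped N) {T : ℝ}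
    (hT : ∀ t, T ≤ t → ϕ t p ∈ U ∪ V) (hTU : ϕ T p ∈ U) : ω⁺ ϕ {p} ⊆ A := by
  intro x hx
  have hxU : x ∈ closure U := closure_mono (image2_Ici_subset_left hU hV hUV hT hTU)
    (omegaLimit_subset_closure_image2 _ _ _ (Ici_mem_atTop T) hx)
  rcases hK ▸ omegaLimit_subset_invariantPart hN hp hx with hxA | hxB
  · exact hxA
  · exact absurd (hBV hxB) (disjoint_left.1 (hUV.closure_left hV) hxU)

theorem exists_time_mem_union_and_omegaLimit_subset [T2Space X] (hN : IsCompact N)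
    {K₀ K₁ : Set X} (hK₀ : IsCompact K₀) (hK₁ : IsCompact K₁) (hdisj : Disjoint K₀ K₁)
    (hK : ϕ.invariantPart N = K₀ ∪ K₁) :
    ∃ (T : ℝ) (U₀ U₁ : Set X), IsOpen U₁ ∧ Disjoint U₀ U₁ ∧ ∀ p ∈ ϕ.forwardTrapped N,
      ϕ T p ∈ U₀ ∪ U₁ ∧ (ϕ T p ∈ U₀ → ω⁺ ϕ {p} ⊆ K₀) ∧ (ϕ T p ∈ U₁ → ω⁺ ϕ {p} ⊆ K₁) := by
  obtain ⟨U₀, U₁, hU₀, hU₁, hKU₀, hKU₁, hU⟩ := SeparatedNhds.of_isCompact_isCompact hK₀ hK₁ hdisj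
  obtain ⟨T, hT⟩ := exists_forall_ge_mem_of_invariantPart_subset hN (hU₀.union hU₁)
    (hK ▸ union_subset_union hKU₀ hKU₁)
  refine ⟨T, U₀, U₁, hU₁, hU, fun p hp => ⟨hT p hp T le_rfl, ?_, ?_⟩⟩
  · exact omegaLimit_subset_of_mem_left hN.isClosed hK hU₀ hU₁ hU hKU₁ hp (hT p hp)
  · refine omegaLimit_subset_of_mem_left hN.isClosed (hK.trans (union_comm _ _)) hU₁ hU₀ hU.symm
      hKU₀ hp fun t ht => ?_
    exact union_comm U₀ U₁ ▸ hT p hp t ht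

theorem forwardTrapped_eq_basin_union_basin [T2Space X] {K₀ K₁ : Set X} (hN : IsCompact N)
    (hK₀ : IsCompact K₀) (hK₁ : IsCompact K₁) (hdisj : Disjoint K₀ K₁)
    (hK : ϕ.invariantPart N = K₀ ∪ K₁) :
    ϕ.forwardTrapped N = ϕ.basin N K₀ ∪ ϕ.basin N K₁ := by
  obtain ⟨T, U₀, U₁, -, -, hT⟩ :=
    exists_time_mem_union_and_omegaLimit_subset hN hK₀ hK₁ hdisj hK
  refine Subset.antisymm (fun p hp => ?_) (union_subset (fun p hp => hp.1) fun p hp => hp.1)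
  obtain ⟨hTp, h₀, h₁⟩ := hT p hp
  rcases hTp with hTp | hTp
  · exact Or.inl ⟨hp, h₀ hTp⟩
  · exact Or.inr ⟨hp, h₁ hTp⟩

theorem isCompact_basin [T2Space X] {K₀ K₁ : Set X} (hN : IsCompact N)
    (hK₀ : IsCompact K₀) (hK₁ : IsCompact K₁) (hdisj : Disjoint K₀ K₁)
    (hK : ϕ.invariantPart N = K₀ ∪ K₁) :
    IsCompact (ϕ.basin N K₀) := by
  obtain ⟨T, U₀, U₁, hU₁, hU, hT⟩ :=
    exists_time_mem_union_and_omegaLimit_subset hN hK₀ hK₁ hdisj hK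
  have h : ϕ.basin N K₀ = ϕ.forwardTrapped N ∩ ϕ T ⁻¹' U₁ᶜ := by
    refine Subset.antisymm (fun p hp => ⟨hp.1, fun hTp => ?_⟩) fun p hp => ?_
    · obtain ⟨x, hx⟩ := nonempty_omegaLimit_of_mem_forwardTrapped hN hp.1
      exact disjoint_left.1 hdisj (hp.2 hx) ((hT p hp.1).2.2 hTp hx)
    · obtain ⟨hTp, h₀, -⟩ := hT p hp.1
      exact ⟨hp.1, h₀ (hTp.resolve_right hp.2)⟩
  refine hN.of_isClosed_subset ?_ fun p hp => hp.1.1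
  exact h ▸ (isClosed_forwardTrapped hN.isClosed).inter
    (hU₁.isClosed_compl.preimage (ϕ.continuous_toFun T))

end Flow

open Flow

theorem stmt10_general {X : Type*} [MetricSpace X]
    (φ : ℝ → X → X)
    (hφcont : Continuous fun q : ℝ × X => φ q.1 q.2)
    (hφzero : ∀ p, φ 0 p = p)
    (hφadd : ∀ s t p, φ (s + t) p = φ s (φ t p))
    (N K0 K1 : Set X) (hN : IsCompact N)
    (hK0 : IsCompact K0) (hK1 : IsCompact K1) (hdisj : Disjoint K0 K1)
    (hK : {p ∈ N | ∀ t : ℝ, φ t p ∈ N} = K0 ∪ K1) :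
    ∃ N0 N1 : Set X,
      IsCompact N0 ∧ IsCompact N1 ∧
      (∀ t : ℝ, 0 ≤ t → φ t '' N0 ⊆ N0) ∧ (∀ t : ℝ, 0 ≤ t → φ t '' N1 ⊆ N1) ∧
      Disjoint N0 N1 ∧
      N0 ∪ N1 = {p ∈ N | ∀ t : ℝ, 0 ≤ t → φ t p ∈ N} ∧
      N0 = {p ∈ N | (∀ t : ℝ, 0 ≤ t → φ t p ∈ N) ∧
        (⋂ t ∈ Ici (0:ℝ), closure {x | ∃ s : ℝ, t ≤ s ∧ x = φ s p}) ⊆ K0} ∧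
      N1 = {p ∈ N | (∀ t : ℝ, 0 ≤ t → φ t p ∈ N) ∧
        (⋂ t ∈ Ici (0:ℝ), closure {x | ∃ s : ℝ, t ≤ s ∧ x = φ s p}) ⊆ K1} := by
  let ϕ : Flow ℝ X := ⟨φ, hφcont, hφadd, hφzero⟩
  have hK₀₁ : ϕ.invariantPart N = K0 ∪ K1 := hK
  have hK₁₀ : ϕ.invariantPart N = K1 ∪ K0 := hK₀₁.trans (union_comm _ _)
  refine ⟨ϕ.basin N K0, ϕ.basin N K1, isCompact_basin hN hK0 hK1 hdisj hK₀₁,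
    isCompact_basin hN hK1 hK0 hdisj.symm hK₁₀, fun t ht => (mapsTo_basin ht).image_subset,
    fun t ht => (mapsTo_basin ht).image_subset, disjoint_basin hN hdisj,
    (forwardTrapped_eq_basin_union_basin hN hK0 hK1 hdisj hK₀₁).symm, ?_, ?_⟩ <;>
  · ext p
    simp only [basin, forwardTrapped, omegaLimit_atTop_singleton_eq]
    exact and_assoc

/-- If the maximal invariant set of an isolating neighbourhood `N` is the disjoint
union of compacta `K₀` and `K₁`, then `N⁺` is the disjoint union of two compact
positively invariant sets `N₀⁺`, `N₁⁺`, where `Nᵢ⁺` consists of the points of `N⁺`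
whose ω-limit set is contained in `Kᵢ`. -/
theorem stmt10 {X : Type*} [MetricSpace X]
    (φ : ℝ → X → X)
    (hφcont : Continuous fun q : ℝ × X => φ q.1 q.2)
    (hφzero : ∀ p, φ 0 p = p)
    (hφadd : ∀ s t p, φ (s + t) p = φ s (φ t p))
    (N K0 K1 : Set X) (hN : IsCompact N)
    (hiso : ∀ p ∈ frontier N, ¬ ∀ t : ℝ, φ t p ∈ N)
    (hK0 : IsCompact K0) (hK1 : IsCompact K1) (hdisj : Disjoint K0 K1)
    (hK : {p ∈ N | ∀ t : ℝ, φ t p ∈ N} = K0 ∪ K1) :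
    ∃ N0 N1 : Set X,
      IsCompact N0 ∧ IsCompact N1 ∧
      (∀ t : ℝ, 0 ≤ t → φ t '' N0 ⊆ N0) ∧ (∀ t : ℝ, 0 ≤ t → φ t '' N1 ⊆ N1) ∧
      Disjoint N0 N1 ∧
      N0 ∪ N1 = {p ∈ N | ∀ t : ℝ, 0 ≤ t → φ t p ∈ N} ∧
      N0 = {p ∈ N | (∀ t : ℝ, 0 ≤ t → φ t p ∈ N) ∧
        (⋂ t ∈ Ici (0:ℝ), closure {x | ∃ s : ℝ, t ≤ s ∧ x = φ s p}) ⊆ K0} ∧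
      N1 = {p ∈ N | (∀ t : ℝ, 0 ≤ t → φ t p ∈ N) ∧
        (⋂ t ∈ Ici (0:ℝ), closure {x | ∃ s : ℝ, t ≤ s ∧ x = φ s p}) ⊆ K1} :=
  stmt10_general φ hφcont hφzero hφadd N K0 K1 hN hK0 hK1 hdisj hK
end

section
/- Let C be an isolating neighbourhood for a continuous flow such that C^o is closed and the closure of C^i is disjoint from C^o. Then the entry time function t^i is bounded below on the closure of C^i; that is, there exists M > 0 such that t^i(p) ≥ -M for all p in the closure of C^i. -/
open Set Filter Topology

set_option maxHeartbeats 1000000 in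
/-- If `C` is an isolating neighbourhood with `C^o` closed and `closure C^i` disjoint
from `C^o`, then the entry time `t^i` is bounded (below) on `closure C^i`. -/
theorem stmt11 {X : Type*} [MetricSpace X]
    (φ : ℝ → X → X)
    (hφcont : Continuous fun q : ℝ × X => φ q.1 q.2)
    (hφzero : ∀ p, φ 0 p = p)
    (hφadd : ∀ s t p, φ (s + t) p = φ s (φ t p))
    (C : Set X) (hC : IsCompact C)
    (hiso : ∀ p ∈ frontier C, ¬ ∀ t : ℝ, φ t p ∈ C)
    (Ci Co : Set X)
    (hCi : Ci = {p ∈ C | ∀ ε : ℝ, 0 < ε → ¬ ∀ s ∈ Icc (-ε) (0:ℝ), φ s p ∈ C})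
    (hCo : Co = {p ∈ C | ∀ ε : ℝ, 0 < ε → ¬ ∀ s ∈ Icc (0:ℝ) ε, φ s p ∈ C})
    (hCoClosed : IsClosed Co)
    (hdisj : closure Ci ∩ Co = ∅) :
    ∃ M : ℝ, 0 < M ∧ ∀ p ∈ closure Ci, ∀ t : ℝ, t ≤ 0 →
      (∀ s ∈ Icc t (0:ℝ), φ s p ∈ C) → -M ≤ t := by
  have hCclosed : IsClosed C := hC.isClosed
  have contφt : ∀ t : ℝ, Continuous fun x : X => φ t x := fun t =>
    hφcont.comp (continuous_const.prodMk continuous_id)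
  have contφx : ∀ x : X, Continuous fun t : ℝ => φ t x := fun x =>
    hφcont.comp (continuous_id.prodMk continuous_const)
  have hCiC : Ci ⊆ C := by rw [hCi]; exact fun q hq => hq.1
  -- pointwise claim: every point of `closure Ci` leaves `C` in finite backward time
  have key : ∀ p ∈ closure Ci, ∃ n : ℕ, ∃ s ∈ Icc (-(n:ℝ)) (0:ℝ), φ s p ∉ C := by
    intro p hp
    by_contra hcon
    push_neg at hcon
    have hfull : ∀ s : ℝ, s ≤ 0 → φ s p ∈ C := by
      intro s hs
      obtain ⟨n, hn⟩ := exists_nat_ge (-s)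
      exact hcon n s ⟨by linarith, hs⟩
    -- step 1 : some backward point is in the interior of C
    have hint : ∃ s : ℝ, s ≤ 0 ∧ φ s p ∈ interior C := by
      by_contra hno
      push_neg at hno
      have hmem : ∀ n : ℕ, φ (-(n:ℝ)) p ∈ C \ interior C := fun n =>
        ⟨hfull _ (neg_nonpos.mpr (Nat.cast_nonneg n)),
         hno _ (neg_nonpos.mpr (Nat.cast_nonneg n))⟩
      obtain ⟨z, hzC, g, hg, hgz⟩ := hC.tendsto_subseq (fun n => (hmem n).1)
      have hcl : IsClosed (C \ interior C) := hCclosed.sdiff isOpen_interior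
      have hzfr : z ∈ C \ interior C :=
        hcl.mem_of_tendsto hgz (Filter.Eventually.of_forall fun n => hmem (g n))
      have hzfr' : z ∈ frontier C := by rw [hCclosed.frontier_eq]; exact hzfr
      refine hiso z hzfr' (fun t => ?_)
      have hlim : Filter.Tendsto (fun l => φ t (φ (-((g l : ℕ) : ℝ)) p)) Filter.atTop
          (𝓝 (φ t z)) := ((contφt t).tendsto z).comp hgz
      refine hCclosed.mem_of_tendsto hlim ?_
      obtain ⟨N, hN⟩ := exists_nat_ge t
      filter_upwards [Filter.eventually_ge_atTop N] with l hl
      rw [← hφadd]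
      apply hfull
      have h1 : (l : ℝ) ≤ (g l : ℝ) := Nat.cast_le.mpr hg.le_apply
      have h2 : (N : ℝ) ≤ (l : ℝ) := Nat.cast_le.mpr hl
      linarith
    -- step 2 : get S > 0 with φ (-S) p ∈ interior C
    obtain ⟨S, hSpos, hSint⟩ : ∃ S : ℝ, 0 < S ∧ φ (-S) p ∈ interior C := by
      obtain ⟨s0, hs0le, hs0int⟩ := hint
      have hopen : IsOpen {u : ℝ | φ u p ∈ interior C} :=
        isOpen_interior.preimage (contφx p)
      obtain ⟨δ, hδpos, hball⟩ := Metric.isOpen_iff.mp hopen s0 hs0int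
      refine ⟨-(s0 - δ/2), by linarith, ?_⟩
      rw [neg_neg]
      apply hball
      simp only [Metric.mem_ball, Real.dist_eq]
      rw [abs_of_nonpos (by linarith)]
      linarith
    -- step 3 : approximating sequence in Ci
    obtain ⟨x, hxCi, hxp⟩ := mem_closure_iff_seq_limit.mp hp
    have hxC : ∀ k, x k ∈ C := fun k => hCiC (hxCi k)
    have hexit : ∀ k : ℕ, ∃ s : ℝ, -(1/((k:ℝ)+1)) ≤ s ∧ s < 0 ∧ φ s (x k) ∉ C := by
      intro k
      have hk := hxCi k
      rw [hCi] at hk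
      have h1 := hk.2 (1/((k:ℝ)+1)) (by positivity)
      push_neg at h1
      obtain ⟨s, hs, hsC⟩ := h1
      refine ⟨s, hs.1, ?_, hsC⟩
      rcases lt_or_eq_of_le hs.2 with h | h
      · exact h
      · exfalso; apply hsC; rw [h, hφzero]; exact hxC k
    choose sk hsk1 hsk2 hsk3 using hexit
    -- step 4 : eventual conditions
    have hev1 : ∀ᶠ k : ℕ in Filter.atTop, φ (-S) (x k) ∈ interior C := by
      have htd : Filter.Tendsto (fun k => φ (-S) (x k)) Filter.atTop (𝓝 (φ (-S) p)) :=
        ((contφt (-S)).tendsto p).comp hxp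
      exact htd.eventually (isOpen_interior.mem_nhds hSint)
    have hev2 : ∀ᶠ k : ℕ in Filter.atTop, -S < sk k := by
      obtain ⟨N, hN⟩ := exists_nat_gt (1/S)
      filter_upwards [Filter.eventually_ge_atTop N] with k hk
      have hNk : (N:ℝ) ≤ (k:ℝ) := Nat.cast_le.mpr hk
      have h1 : (1:ℝ)/S < (k:ℝ) + 1 := by linarith
      have h2 : 1/((k:ℝ)+1) < S := by
        rw [div_lt_iff₀ (by positivity)]
        rw [div_lt_iff₀ hSpos] at h1
        linarith [mul_comm S ((k:ℝ)+1)]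
      have h3 := hsk1 k
      linarith
    obtain ⟨K, hK⟩ := Filter.eventually_atTop.mp (hev1.and hev2)
    -- step 5 : crossing points in Co
    have hcross : ∀ k : ℕ, ∃ c : ℝ, K ≤ k →
        c ∈ Icc (-S) (0:ℝ) ∧ φ c (x k) ∈ Co := by
      intro k
      by_cases hk : K ≤ k
      swap
      · exact ⟨0, fun h => absurd h hk⟩
      have hSin : φ (-S) (x k) ∈ C := interior_subset (hK k hk).1
      have hSsk : -S < sk k := (hK k hk).2
      set A : Set ℝ := Icc (-S) (sk k) ∩ (fun t => φ t (x k)) ⁻¹' C with hAdef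
      have hAcomp : IsCompact A :=
        isCompact_Icc.inter_right (hCclosed.preimage (contφx (x k)))
      have hAne : A.Nonempty := ⟨-S, ⟨le_refl _, hSsk.le⟩, hSin⟩
      set c : ℝ := sSup A with hcdef
      have hcA : c ∈ A := hAcomp.sSup_mem hAne
      have hcIcc : c ∈ Icc (-S) (0:ℝ) := ⟨hcA.1.1, le_trans hcA.1.2 (hsk2 k).le⟩
      have hclt : c < sk k := by
        rcases lt_or_eq_of_le hcA.1.2 with h | h
        · exact h
        · exfalso; apply hsk3 k; rw [← h]; exact hcA.2
      have hout : ∀ t : ℝ, c < t → t ≤ sk k → φ t (x k) ∉ C := by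
        intro t ht1 ht2 htC
        have hmem : t ∈ A := ⟨⟨le_trans hcIcc.1 ht1.le, ht2⟩, htC⟩
        have := le_csSup hAcomp.bddAbove hmem
        rw [← hcdef] at this
        linarith
      refine ⟨c, fun _ => ⟨hcIcc, ?_⟩⟩
      rw [hCo]
      refine ⟨hcA.2, ?_⟩
      intro ε hε hall
      have ht1 : c < min (c + ε) (sk k) := lt_min (by linarith) hclt
      have ht2 : min (c + ε) (sk k) ≤ sk k := min_le_right _ _
      refine hout (min (c + ε) (sk k)) ht1 ht2 ?_
      have hu : min (c + ε) (sk k) - c ∈ Icc (0:ℝ) ε :=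
        ⟨by linarith, by have := min_le_left (c + ε) (sk k); linarith⟩
      have := hall (min (c + ε) (sk k) - c) hu
      rwa [← hφadd, sub_add_cancel] at this
    choose ck hck using hcross
    -- step 6 : limit of crossing points
    obtain ⟨cstar, hcst, g, hg, hcg⟩ := isCompact_Icc.tendsto_subseq
      (fun l : ℕ => (hck (l + K) (Nat.le_add_left K l)).1)
    have hxg : Filter.Tendsto (fun l => x (g l + K)) Filter.atTop (𝓝 p) :=
      hxp.comp ((Filter.tendsto_add_atTop_nat K).comp hg.tendsto_atTop)
    have hwlim : Filter.Tendsto (fun l => φ (ck (g l + K)) (x (g l + K)))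
        Filter.atTop (𝓝 (φ cstar p)) :=
      (hφcont.tendsto (cstar, p)).comp (hcg.prodMk_nhds hxg)
    have hcCo : φ cstar p ∈ Co :=
      hCoClosed.mem_of_tendsto hwlim
        (Filter.Eventually.of_forall fun l => (hck _ (Nat.le_add_left K (g l))).2)
    rcases lt_or_eq_of_le hcst.2 with hlt | heq
    · rw [hCo] at hcCo
      refine hcCo.2 (-cstar) (by linarith) ?_
      intro u hu
      rw [← hφadd]
      exact hfull (u + cstar) (by linarith [hu.2])
    · rw [heq, hφzero] at hcCo
      have : p ∈ closure Ci ∩ Co := ⟨hp, hcCo⟩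
      rw [hdisj] at this
      exact this
  -- uniformity via compactness
  have hclComp : IsCompact (closure Ci) :=
    hC.of_isClosed_subset isClosed_closure (closure_minimal hCiC hCclosed)
  set U : ℕ → Set X := fun n => ⋃ s ∈ Icc (-(n:ℝ)) (0:ℝ), {q | φ s q ∉ C} with hUdef
  have hUopen : ∀ n, IsOpen (U n) := by
    intro n
    refine isOpen_biUnion (fun s _ => ?_)
    exact hCclosed.isOpen_compl.preimage (contφt s)
  have hcover : closure Ci ⊆ ⋃ n, U n := by
    intro q hq
    obtain ⟨n, s, hs, hns⟩ := key q hq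
    exact mem_iUnion.mpr ⟨n, mem_biUnion hs hns⟩
  obtain ⟨F, hF⟩ := hclComp.elim_finite_subcover U hUopen hcover
  refine ⟨((F.sup id : ℕ) : ℝ) + 1, by positivity, ?_⟩
  intro p hp τ hτ hseg
  by_contra hcon
  push_neg at hcon
  have hpF := hF hp
  simp only [Finset.mem_coe, mem_iUnion] at hpF
  obtain ⟨n, hnF, hpn⟩ := hpF
  simp only [hUdef, mem_iUnion, exists_prop] at hpn
  obtain ⟨s, hs, hsC⟩ := hpn
  have hn : (n : ℝ) ≤ ((F.sup id : ℕ) : ℝ) := Nat.cast_le.mpr (Finset.le_sup (f := id) hnF)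
  have hsτ : τ ≤ s := by
    have := hs.1
    linarith
  exact hsC (hseg s ⟨hsτ, hs.2⟩)
end

section
/- Let (Q,Q₀) be an index pair for a continuous flow and g : Q → [0,1] a Lyapunov function for it. For 0 < α < 1, the set N_α = {p ∈ Q : g(p) ≥ α} is an isolating neighbourhood whose immediate exit set is exactly {p ∈ Q : g(p) = α}; in particular this exit set is closed. -/
open Set

/-- For an index pair `(Q,Q₀)` with Lyapunov function `g` and `0 < α < 1`, the set
`N_α = {p ∈ Q : g(p) ≥ α}` is an isolating neighbourhood whose immediate exit set
is exactly `{p ∈ Q : g(p) = α}`; in particular the exit set is closed. -/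
theorem stmt12 {X : Type*} [MetricSpace X]
    (φ : ℝ → X → X)
    (hφcont : Continuous fun q : ℝ × X => φ q.1 q.2)
    (hφzero : ∀ p, φ 0 p = p)
    (hφadd : ∀ s t p, φ (s + t) p = φ s (φ t p))
    (Q Q0 : Set X) (hQ : IsCompact Q) (hQ0 : IsCompact Q0) (hQ0Q : Q0 ⊆ Q)
    -- `closure (Q \ Q₀)` is an isolating neighbourhood
    (hiso : ∀ p ∈ frontier (closure (Q \ Q0)), ¬ ∀ t : ℝ, φ t p ∈ closure (Q \ Q0))
    -- `Q₀` is positively invariant in `Q`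
    (hposinv : ∀ p ∈ Q0, ∀ t : ℝ, 0 ≤ t → (∀ s ∈ Icc (0:ℝ) t, φ s p ∈ Q) →
      ∀ s ∈ Icc (0:ℝ) t, φ s p ∈ Q0)
    -- `Q₀` is an exit set for `Q`
    (hexit : ∀ p ∈ Q, (∃ t : ℝ, 0 ≤ t ∧ φ t p ∉ Q) →
      ∃ t : ℝ, 0 ≤ t ∧ (∀ s ∈ Icc (0:ℝ) t, φ s p ∈ Q) ∧ φ t p ∈ Q0)
    -- the Lyapunov function
    (g : X → ℝ) (hgc : ContinuousOn g Q) (hgrange : ∀ p ∈ Q, g p ∈ Icc (0:ℝ) 1)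
    (hg1 : ∀ p ∈ Q, (g p = 1 ↔ ((∀ t : ℝ, 0 ≤ t → φ t p ∈ Q) ∧
      (⋂ t ∈ Ici (0:ℝ), closure {x | ∃ s : ℝ, t ≤ s ∧ x = φ s p}) ∩ Q0 = ∅)))
    (hg0 : ∀ p ∈ Q, (g p = 0 ↔ p ∈ Q0))
    (hgdec : ∀ p ∈ Q, 0 < g p → g p < 1 → ∀ t : ℝ, 0 < t →
      (∀ s ∈ Icc (0:ℝ) t, φ s p ∈ Q) → g (φ t p) < g p)
    (α : ℝ) (hα0 : 0 < α) (hα1 : α < 1) :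
    IsCompact {p ∈ Q | α ≤ g p} ∧
    (∀ p ∈ frontier {p ∈ Q | α ≤ g p}, ¬ ∀ t : ℝ, φ t p ∈ {p ∈ Q | α ≤ g p}) ∧
    {p ∈ {p ∈ Q | α ≤ g p} |
        ∀ ε : ℝ, 0 < ε → ¬ ∀ s ∈ Icc (0:ℝ) ε, φ s p ∈ {p ∈ Q | α ≤ g p}}
      = {p ∈ Q | g p = α} ∧
    IsClosed {p ∈ Q | g p = α} := by
  set N : Set X := {p ∈ Q | α ≤ g p} with hNdef
  have hNQ : N ⊆ Q := fun p hp => hp.1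
  have hNclosed : IsClosed N := by
    have heq : N = Q ∩ g ⁻¹' Ici α := by
      ext p; simp [hNdef, Set.mem_setOf_eq, Set.mem_preimage, Set.mem_Ici]
    rw [heq]
    exact hgc.preimage_isClosed_of_isClosed hQ.isClosed isClosed_Ici
  have hNcompact : IsCompact N := hQ.of_isClosed_subset hNclosed hNQ
  have hNnotQ0 : ∀ p ∈ N, p ∉ Q0 := by
    intro p hp hp0
    have h0 : g p = 0 := (hg0 p hp.1).2 hp0
    have := hp.2
    linarith
  -- immediate exit at level α
  have hexitα : ∀ p ∈ Q, g p = α → ∀ ε : ℝ, 0 < ε → ¬ ∀ s ∈ Icc (0:ℝ) ε, φ s p ∈ N := by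
    intro p hp hgp ε hε hall
    have hQs : ∀ s ∈ Icc (0:ℝ) ε, φ s p ∈ Q := fun s hs => (hall s hs).1
    have hdec := hgdec p hp (by rw [hgp]; exact hα0) (by rw [hgp]; exact hα1) ε hε hQs
    have hge := (hall ε ⟨le_of_lt hε, le_refl ε⟩).2
    rw [hgp] at hdec
    linarith
  -- if g p > α then p stays in N for a short time
  have hstay : ∀ p ∈ Q, α < g p → ∃ ε : ℝ, 0 < ε ∧ ∀ s ∈ Icc (0:ℝ) ε, φ s p ∈ N := by
    intro p hp hgt
    by_cases hQstay : ∃ ε : ℝ, 0 < ε ∧ ∀ s ∈ Icc (0:ℝ) ε, φ s p ∈ Q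
    · obtain ⟨ε, hε, hQs⟩ := hQstay
      set F : ℝ → ℝ := fun s => g (φ s p) with hFdef
      have cφ : Continuous fun s : ℝ => φ s p :=
        hφcont.comp (continuous_id.prodMk continuous_const)
      have hF0 : F 0 = g p := by simp [hFdef, hφzero]
      have hFc : ContinuousWithinAt F (Icc (0:ℝ) ε) 0 := by
        have h0mem : (0:ℝ) ∈ Icc (0:ℝ) ε := ⟨le_refl 0, le_of_lt hε⟩
        exact ContinuousWithinAt.comp (g := g) (f := fun s : ℝ => φ s p)
          (hgc _ (hQs 0 h0mem)) cφ.continuousWithinAt (fun s hs => hQs s hs)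
      have hmem : F ⁻¹' Ioi α ∈ nhdsWithin 0 (Icc (0:ℝ) ε) := by
        apply hFc (Ioi_mem_nhds _)
        rw [hF0]; exact hgt
      rw [Metric.mem_nhdsWithin_iff] at hmem
      obtain ⟨δ, hδ, hball⟩ := hmem
      refine ⟨min ε (δ/2), lt_min hε (by linarith), ?_⟩
      intro s hs
      have hsε : s ∈ Icc (0:ℝ) ε := ⟨hs.1, le_trans hs.2 (min_le_left _ _)⟩
      have hsδ : s ∈ Metric.ball (0:ℝ) δ := by
        rw [Metric.mem_ball, Real.dist_eq, sub_zero, abs_of_nonneg hs.1]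
        exact lt_of_le_of_lt (le_trans hs.2 (min_le_right _ _)) (by linarith)
      have : F s ∈ Ioi α := hball ⟨hsδ, hsε⟩
      exact ⟨hQs s hsε, le_of_lt this⟩
    · exfalso
      push_neg at hQstay
      obtain ⟨s, hs, hns⟩ := hQstay 1 one_pos
      obtain ⟨t₀, ht₀, hint, hQ0mem⟩ := hexit p hp ⟨s, hs.1, hns⟩
      rcases eq_or_lt_of_le ht₀ with h0 | hpos
      · have : p ∈ Q0 := by rw [← h0, hφzero] at hQ0mem; exact hQ0mem
        have := (hg0 p hp).2 this
        linarith
      · obtain ⟨s', hs', hns'⟩ := hQstay t₀ hpos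
        exact hns' (hint s' hs')
  -- the exit set equality
  have hExitEq : {p ∈ N | ∀ ε : ℝ, 0 < ε → ¬ ∀ s ∈ Icc (0:ℝ) ε, φ s p ∈ N}
      = {p ∈ Q | g p = α} := by
    ext p
    simp only [Set.mem_setOf_eq]
    constructor
    · rintro ⟨hpN, hex⟩
      refine ⟨hpN.1, ?_⟩
      rcases eq_or_lt_of_le hpN.2 with h | h
      · exact h.symm
      · obtain ⟨ε, hε, hstayN⟩ := hstay p hpN.1 h
        exact absurd hstayN (hex ε hε)
    · rintro ⟨hpQ, hgp⟩
      exact ⟨⟨hpQ, ge_of_eq hgp⟩, hexitα p hpQ hgp⟩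
  -- closedness of the exit set
  have hExitClosed : IsClosed {p ∈ Q | g p = α} := by
    have heq : {p ∈ Q | g p = α} = Q ∩ g ⁻¹' {α} := by
      ext p; simp [Set.mem_setOf_eq]
    rw [heq]
    exact hgc.preimage_isClosed_of_isClosed hQ.isClosed isClosed_singleton
  refine ⟨hNcompact, ?_, hExitEq, hExitClosed⟩
  -- isolating neighbourhood
  intro p hpf hall
  have hpN : p ∈ N := by
    have : p ∈ closure N := hpf.1
    rwa [hNclosed.closure_eq] at this
  rcases eq_or_lt_of_le hpN.2 with h | h
  · exact hexitα p hpN.1 h.symm 1 one_pos (fun s _ => hall s)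
  · -- g p > α : p must be on the frontier of Q
    have hpc : p ∈ closure Qᶜ := by
      by_contra hnc
      have hint : p ∈ interior Q := by
        rw [← compl_compl (interior Q), ← closure_compl]
        exact hnc
      have hQnhds : Q ∈ nhds p := mem_interior_iff_mem_nhds.1 hint
      have hgat : ContinuousAt g p := hgc.continuousAt hQnhds
      have h1 : g ⁻¹' Ioi α ∈ nhds p := hgat (Ioi_mem_nhds h)
      have h2 : N ∈ nhds p := by
        filter_upwards [h1, hQnhds] with q hq hqQ
        exact ⟨hqQ, le_of_lt hq⟩
      exact hpf.2 (mem_interior_iff_mem_nhds.2 h2)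
    have hNsub : N ⊆ closure (Q \ Q0) := by
      intro q hq
      exact subset_closure ⟨hq.1, hNnotQ0 q hq⟩
    have hclQ : closure (Q \ Q0) ⊆ Q :=
      (closure_mono Set.diff_subset).trans hQ.isClosed.closure_eq.subset
    have hsubc : Qᶜ ⊆ (closure (Q \ Q0))ᶜ := fun q hq hq' => hq (hclQ hq')
    have hpfront : p ∈ frontier (closure (Q \ Q0)) := by
      refine ⟨by rw [isClosed_closure.closure_eq]; exact hNsub hpN, ?_⟩
      have hmem : p ∈ closure (closure (Q \ Q0))ᶜ := closure_mono hsubc hpc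
      rw [closure_compl] at hmem
      exact hmem
    obtain ⟨t, ht⟩ := not_forall.1 (hiso p hpfront)
    exact ht (hNsub (hall t))
end

section
/- Let N' ⊆ int N be nested compact 3-manifolds and suppose a compact set K is a spine of both N and N'. Then the inclusion N' − K ⊆ N − K induces isomorphisms in Čech (equivalently singular) cohomology with ℤ coefficients. -/
open Set Topology

/-!
A homeomorphism `h : N − K ≃ₜ ∂N × [0, ∞)` exhibits each tail `N_r = {x | r ≤ (h x).2}` as a
deformation retract of `N − K` (push the collar coordinate up to `r`), so `N_r ⊆ N − K` is
invisible to cohomology. By compactness the tails of `N` and `N'` interlace,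
`N'_s ⊆ N_r ⊆ N' − K ⊆ N − K`; the restrictions along the two outer pairs of consecutive
inclusions are then bijective, and the two-out-of-six property makes `N' − K ⊆ N − K` an
isomorphism as well.
-/

section Collar

variable {X B : Type*} [TopologicalSpace X] [TopologicalSpace B] {S : Set X}
  (h : S ≃ₜ B × Ici (0 : ℝ))

def collarTail (r : ℝ) : Set X := {x | ∃ hx : x ∈ S, r ≤ ((h ⟨x, hx⟩).2 : ℝ)}

lemma collarTail_subset (r : ℝ) : collarTail h r ⊆ S := fun _ hx => hx.1

def collarPush (s : ℝ) (y : S) : S :=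
  h.symm ((h y).1, ⟨max (h y).2 s, mem_Ici.2 (le_max_of_le_left (h y).2.2)⟩)

lemma continuous_collarPush : Continuous fun p : ℝ × S => collarPush h p.1 p.2 := by
  unfold collarPush
  fun_prop

lemma collarPush_of_le {s : ℝ} {y : S} (hs : s ≤ (h y).2) : collarPush h s y = y := by
  simp [collarPush, max_eq_left hs]

lemma collarPush_mem_collarTail (r : ℝ) (y : S) : (collarPush h r y : X) ∈ collarTail h r :=
  ⟨(collarPush h r y).2, by simp [collarPush]⟩

def collarTailHomotopyEquiv (r : ℝ) : ContinuousMap.HomotopyEquiv (collarTail h r) S where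
  toFun := ⟨inclusion (collarTail_subset h r), continuous_inclusion _⟩
  invFun := ⟨fun y => ⟨collarPush h r y, collarPush_mem_collarTail h r y⟩,
    ((continuous_collarPush h).comp
      (continuous_const.prodMk continuous_id)).subtype_val.subtype_mk _⟩
  left_inv := ⟨(ContinuousMap.Homotopy.refl _).cast
    (ContinuousMap.ext fun ⟨_, _, hrx⟩ => Subtype.ext (by simp [collarPush_of_le h hrx]))
    rfl⟩
  right_inv := ⟨(ContinuousMap.Homotopy.mk
    ⟨fun p => collarPush h ((p.1 : ℝ) * r) p.2,
      (continuous_collarPush h).comp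
        (((continuous_subtype_val.comp continuous_fst).mul continuous_const).prodMk
          continuous_snd)⟩
    (fun y => by simpa using collarPush_of_le h (h y).2.2)
    (fun y => by simp)).symm⟩

lemma exists_collarTail_subset {N U : Set X} (hN : IsCompact N) (hSN : S ⊆ N) (hU : IsOpen U)
    (hNU : N \ U ⊆ S) : ∃ r : ℝ, collarTail h r ⊆ U := by
  have hC : IsCompact (Subtype.val ⁻¹' (N \ U) : Set S) :=
    IsInducing.subtypeVal.isCompact_preimage' (hN.diff hU) (by rwa [Subtype.range_coe])
  obtain ⟨r, hr⟩ :=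
    (hC.image ((continuous_subtype_val.comp continuous_snd).comp h.continuous)).bddAbove
  refine ⟨r + 1, fun x ⟨hxS, hrx⟩ => ?_⟩
  by_contra hxU
  have : ((h ⟨x, hxS⟩).2 : ℝ) ≤ r := hr ⟨⟨x, hxS⟩, ⟨hSN hxS, hxU⟩, rfl⟩
  linarith

end Collar

lemma collarTail_union_mem_nhdsSet {X B : Type*} [TopologicalSpace X] [T2Space X]
    [TopologicalSpace B] [CompactSpace B] {N K : Set X} (h : ↥(N \ K) ≃ₜ B × Ici (0 : ℝ))
    (hK : K ⊆ interior N) (r : ℝ) : collarTail h r ∪ K ∈ 𝓝ˢ K := by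
  -- `C` is the compact part `B × [0, r]` of the collar; `interior N \ C` is an open set around `K`.
  set C : Set X := Subtype.val '' (h ⁻¹' (univ ×ˢ (Subtype.val ⁻¹' Icc 0 r)))
  have hC : IsCompact C :=
    (h.isCompact_preimage.2 (isCompact_univ.prod
      (isClosed_Ici.isClosedEmbedding_subtypeVal.isCompact_preimage isCompact_Icc))).image
      continuous_subtype_val
  refine Filter.mem_of_superset
    ((isOpen_interior.sdiff hC.isClosed).mem_nhdsSet.2 fun k hk => ⟨hK hk, ?_⟩) ?_
  · rintro ⟨y, -, rfl⟩
    exact y.2.2 hk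
  · rintro x ⟨hxN, hxC⟩
    by_cases hxK : x ∈ K
    · exact Or.inr hxK
    · have hxS : x ∈ N \ K := ⟨interior_subset hxN, hxK⟩
      exact Or.inl ⟨hxS, le_of_not_ge fun hxr =>
        hxC ⟨⟨x, hxS⟩, ⟨trivial, (h _).2.2, hxr⟩, rfl⟩⟩

theorem Function.Bijective.of_comp_of_comp {α β γ δ : Type*}
    {f : α → β} {g : β → γ} {k : γ → δ}
    (hgf : Bijective (g ∘ f)) (hkg : Bijective (k ∘ g)) : Bijective f :=
  (Bijective.of_comp_iff' ⟨hkg.injective.of_comp, hgf.surjective.of_comp⟩ f).1 hgf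

theorem stmt18_general {X : Type} [TopologicalSpace X] [T2Space X]
    (N N' K : Set X)
    (hN : IsCompact N) (hN' : IsCompact N')
    (hnest : N' ⊆ interior N) (hKN' : K ⊆ interior N')
    (hfrN : frontier N ⊆ N \ K) (hfrN' : frontier N' ⊆ N' \ K)
    -- `K` is a spine of `N`
    (hspineN : ∃ h : ↥(N \ K) ≃ₜ (↥(frontier N) × ↥(Set.Ici (0:ℝ))),
      ∀ p (hp : p ∈ frontier N), h ⟨p, hfrN hp⟩ = (⟨p, hp⟩, ⟨0, Set.self_mem_Ici⟩))
    -- `K` is a spine of `N'`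
    (hspineN' : ∃ h : ↥(N' \ K) ≃ₜ (↥(frontier N') × ↥(Set.Ici (0:ℝ))),
      ∀ p (hp : p ∈ frontier N'), h ⟨p, hfrN' hp⟩ = (⟨p, hp⟩, ⟨0, Set.self_mem_Ici⟩))
    -- a contravariant, homotopy-invariant cohomology functor on subspaces of `X`
    (F : Set X → Type) [∀ A, AddCommGroup (F A)]
    (res : ∀ {A B : Set X}, A ⊆ B → (F B →+ F A))
    (res_comp : ∀ {A B C : Set X} (h₁ : A ⊆ B) (h₂ : B ⊆ C),
      (res h₁).comp (res h₂) = res (h₁.trans h₂))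
    (hinv : ∀ {A B : Set X} (h : A ⊆ B),
      (∃ e : ContinuousMap.HomotopyEquiv ↥A ↥B, ⇑e.toFun = Set.inclusion h) →
      Function.Bijective (res h)) :
    Function.Bijective (res (show N' \ K ⊆ N \ K from Set.diff_subset_diff_left (hnest.trans interior_subset))) := by
  obtain ⟨h, -⟩ := hspineN
  obtain ⟨h', -⟩ := hspineN'
  have : CompactSpace (frontier N) := isCompact_iff_compactSpace.1
    (hN.of_isClosed_subset isClosed_frontier (hfrN.trans sdiff_subset))
  obtain ⟨r₁, hr₁⟩ := exists_collarTail_subset h hN sdiff_subset isOpen_interior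
    (sdiff_subset_sdiff_right hKN')
  have hT₁ : collarTail h r₁ ⊆ N' \ K := fun x hx =>
    ⟨interior_subset (hr₁ hx), (collarTail_subset h r₁ hx).2⟩
  obtain ⟨r₂, hr₂⟩ := exists_collarTail_subset h' hN' sdiff_subset isOpen_interior
    (sdiff_subset_sdiff_right (subset_interior_iff_mem_nhdsSet.2
      (collarTail_union_mem_nhdsSet h (hKN'.trans (interior_subset.trans hnest)) r₁)))
  have hT₂ : collarTail h' r₂ ⊆ collarTail h r₁ := fun x hx =>
    (interior_subset (hr₂ hx)).resolve_right (collarTail_subset h' r₂ hx).2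
  have res_trans {A B C : Set X} (h₁ : A ⊆ B) (h₂ : B ⊆ C) :
      ⇑(res h₁) ∘ ⇑(res h₂) = ⇑(res (h₁.trans h₂)) :=
    congrArg DFunLike.coe (res_comp h₁ h₂)
  refine Function.Bijective.of_comp_of_comp (g := res hT₁) (k := res hT₂) ?_ ?_
  · rw [res_trans]
    exact hinv _ ⟨collarTailHomotopyEquiv h r₁, rfl⟩
  · rw [res_trans]
    exact hinv _ ⟨collarTailHomotopyEquiv h' r₂, rfl⟩

/-- If `K` is a spine of both nested compact 3-manifolds `N' ⊆ int N`, then the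
inclusion `N' − K ⊆ N − K` induces isomorphisms in cohomology.  Cohomology is
encoded as an arbitrary contravariant functor `F` (with `ℤ` coefficients, i.e.
with values abelian groups) on subspaces of the ambient space, with restriction
maps for inclusions, functorial, and invariant under those inclusions which are
homotopy equivalences; the conclusion holds for every such functor. -/
theorem stmt18 {X : Type} [TopologicalSpace X] [T2Space X]
    (N N' K : Set X)
    (hN : IsCompact N) (hN' : IsCompact N')
    (hnest : N' ⊆ interior N) (hK : IsCompact K) (hKN' : K ⊆ interior N')
    (hfrN : frontier N ⊆ N \ K) (hfrN' : frontier N' ⊆ N' \ K)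
    -- `K` is a spine of `N`
    (hspineN : ∃ h : ↥(N \ K) ≃ₜ (↥(frontier N) × ↥(Set.Ici (0:ℝ))),
      ∀ p (hp : p ∈ frontier N), h ⟨p, hfrN hp⟩ = (⟨p, hp⟩, ⟨0, Set.self_mem_Ici⟩))
    -- `K` is a spine of `N'`
    (hspineN' : ∃ h : ↥(N' \ K) ≃ₜ (↥(frontier N') × ↥(Set.Ici (0:ℝ))),
      ∀ p (hp : p ∈ frontier N'), h ⟨p, hfrN' hp⟩ = (⟨p, hp⟩, ⟨0, Set.self_mem_Ici⟩))
    -- a contravariant, homotopy-invariant cohomology functor on subspaces of `X`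
    (F : Set X → Type) [∀ A, AddCommGroup (F A)]
    (res : ∀ {A B : Set X}, A ⊆ B → (F B →+ F A))
    (res_id : ∀ (A : Set X) (h : A ⊆ A), res h = AddMonoidHom.id (F A))
    (res_comp : ∀ {A B C : Set X} (h₁ : A ⊆ B) (h₂ : B ⊆ C),
      (res h₁).comp (res h₂) = res (h₁.trans h₂))
    (hinv : ∀ {A B : Set X} (h : A ⊆ B),
      (∃ e : ContinuousMap.HomotopyEquiv ↥A ↥B, ⇑e.toFun = Set.inclusion h) →
      Function.Bijective (res h)) :
    Function.Bijective (res (show N' \ K ⊆ N \ K from Set.diff_subset_diff_left (hnest.trans interior_subset))) :=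
  stmt18_general N N' K hN hN' hnest hKN' hfrN hfrN' hspineN hspineN' F res res_comp hinv
end
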